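/- arXiv:2504.20240 — 4 statements merged into one kernel-verified Lean document; each statement's English description precedes it below -/
import Mathlib

section
/- Let K ⊆ ℂ be a non-empty compact set. For any ε₁ > ε₂ > 0, the transfinite diameters (equivalently, logarithmic capacities) of the closed neighbourhoods satisfy c(K^{ε₁}) ≤ 2·(ε₁/ε₂)·c(K^{ε₂}). -/
/-- The `n`-th diameter of a set `K ⊆ ℂ`:
`δ_n(K) = sup { ∏_{j<k} |w_j - w_k|^{2/(n(n-1))} : w_1, …, w_n ∈ K }`. -/
noncomputable def nthDiameter (K : Set ℂ) (n : ℕ) : ℝ :=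
  sSup {x : ℝ | ∃ w : Fin n → ℂ, (∀ i, w i ∈ K) ∧
    x = ∏ p ∈ Finset.univ.filter (fun p : Fin n × Fin n => p.1 < p.2),
      ‖w p.1 - w p.2‖ ^ ((2 : ℝ) / ((n : ℝ) * ((n : ℝ) - 1)))}

/-- The transfinite diameter (logarithmic capacity) of `K`: the limit of the
non-increasing sequence `(δ_n(K))_{n ≥ 2}`, i.e. its infimum. -/
noncomputable def capacity (K : Set ℂ) : ℝ :=
  ⨅ n : ℕ, nthDiameter K (n + 2)

/-- The closed `ε`-neighbourhood `K^ε = {z : dist(z, K) ≤ ε}`. -/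
def closedNbhd (K : Set ℂ) (ε : ℝ) : Set ℂ :=
  {z : ℂ | Metric.infDist z K ≤ ε}

section aux
-- core real inequality
lemma real_core (P Q s t : ℝ) (hP : 0 ≤ P) (hQ : 0 ≤ Q) (hsP : -P ≤ s)
    (hCS : s^2 ≤ P * Q) (ht0 : 0 < t) (ht1 : t ≤ 1) :
    0 ≤ P*(4 - t^2) + s*(8*t - 2*t^2) + 3*t^2*Q := by
  rcases le_total P Q with h | h
  · nlinarith [mul_nonneg (mul_nonneg ht0.le (sub_nonneg.2 ht1)) (sub_nonneg.2 h),
      mul_nonneg (sub_nonneg.2 hsP) (mul_nonneg ht0.le (sub_nonneg.2 ht1)), sq_nonneg (1-t)]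
  · -- Q ≤ P; use u = sqrt Q, v = sqrt P
    rcases le_or_gt 0 s with hs | hs
    · have h1 : 0 ≤ P*(4 - t^2) := mul_nonneg hP (by nlinarith)
      have h2 : 0 ≤ s*(8*t - 2*t^2) := mul_nonneg hs (by nlinarith)
      have h3 : 0 ≤ 3*t^2*Q := by positivity
      linarith
    · set u := Real.sqrt Q with hu
      set v := Real.sqrt P with hv
      have hu0 : 0 ≤ u := Real.sqrt_nonneg _
      have hv0 : 0 ≤ v := Real.sqrt_nonneg _
      have hQu : Q = u^2 := (Real.sq_sqrt hQ).symm
      have hPv : P = v^2 := (Real.sq_sqrt hP).symm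
      have huv : u ≤ v := Real.sqrt_le_sqrt h
      have hsuv : -(u*v) ≤ s := by
        nlinarith [sq_nonneg (s + u*v), Real.sq_sqrt hQ, Real.sq_sqrt hP,
          mul_nonneg hu0 hv0]
      nlinarith [sq_nonneg (u - v), mul_nonneg (mul_nonneg (sub_nonneg.2 ht1) hv0) (sub_nonneg.2 huv),
        mul_nonneg (mul_nonneg (sub_nonneg.2 ht1) hv0) hv0,
        mul_nonneg (mul_nonneg ht0.le (sub_nonneg.2 ht1)) (mul_nonneg hv0 (sub_nonneg.2 huv)),
        mul_nonneg (sub_nonneg.2 hsuv) ht0.le]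

lemma pair_ineq (a b d : ℂ) (t : ℝ) (ht0 : 0 < t) (ht1 : t ≤ 1)
    (ha : ‖a‖ ≤ ‖a + d‖)
    (hb : ‖b‖ ≤ ‖b - d‖) :
    ‖d + (a - b)‖ ≤ (2/t) * ‖d + (t:ℂ) * (a - b)‖ := by
  have h2t : 0 ≤ 2/t := by positivity
  rw [← Real.sqrt_sq (norm_nonneg _), ← Real.sqrt_sq
    (mul_nonneg h2t (norm_nonneg _))]
  apply Real.sqrt_le_sqrt
  have ha' : Complex.normSq a ≤ Complex.normSq (a + d) := by
    rw [Complex.normSq_eq_norm_sq, Complex.normSq_eq_norm_sq]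
    exact pow_le_pow_left₀ (norm_nonneg _) ha 2
  have hb' : Complex.normSq b ≤ Complex.normSq (b - d) := by
    rw [Complex.normSq_eq_norm_sq, Complex.normSq_eq_norm_sq]
    exact pow_le_pow_left₀ (norm_nonneg _) hb 2
  rw [mul_pow, Complex.sq_norm, Complex.sq_norm]
  set c : ℂ := a - b with hc
  have key := real_core (Complex.normSq d) (Complex.normSq c)
    (d.re * c.re + d.im * c.im) t (Complex.normSq_nonneg _) (Complex.normSq_nonneg _)
    (by simp only [Complex.normSq_apply, hc, Complex.sub_re, Complex.sub_im,
        Complex.add_re, Complex.add_im] at ha' hb' ⊢; nlinarith)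
    (by simp only [Complex.normSq_apply]; nlinarith [sq_nonneg (d.re*c.im - d.im*c.re)])
    ht0 ht1
  have ht2 : t^2 > 0 := by positivity
  simp only [Complex.normSq_apply, Complex.add_re, Complex.add_im, Complex.mul_re,
    Complex.mul_im, Complex.ofReal_re, Complex.ofReal_im] at key ⊢
  have h4 : (2/t)^2 = 4/t^2 := by ring
  rw [h4, div_mul_eq_mul_div, le_div_iff₀ ht2]
  nlinarith [key]

lemma card_pairs (n : ℕ) :
    (Finset.univ.filter (fun p : Fin n × Fin n => p.1 < p.2)).card * 2 = n * (n-1) := by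
  have h : (Finset.univ.filter (fun p : Fin n × Fin n => p.1 < p.2)).card
      = ∑ j : Fin n, (j : ℕ) := by
    rw [Finset.card_filter, ← Finset.univ_product_univ, Finset.sum_product_right]
    congr 1; funext j
    rw [← Finset.card_filter]
    have : (Finset.univ.filter (fun i : Fin n => i < j)) = Finset.Iio j := by
      ext i; simp
    rw [this, Fin.card_Iio]
  rw [h, Fin.sum_univ_eq_sum_range (fun i => i), ← Finset.sum_range_id_mul_two]

lemma exp_card (n : ℕ) (hn : 2 ≤ n) :
    ((2:ℝ)/((n:ℝ)*((n:ℝ)-1))) *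
      ((Finset.univ.filter (fun p : Fin n × Fin n => p.1 < p.2)).card : ℝ) = 1 := by
  have h := card_pairs n
  have h1 : (1:ℕ) ≤ n := by omega
  have hR : ((Finset.univ.filter (fun p : Fin n × Fin n => p.1 < p.2)).card : ℝ) * 2
      = (n:ℝ) * ((n:ℝ) - 1) := by
    have := congrArg (Nat.cast (R := ℝ)) h
    push_cast [Nat.cast_sub h1] at this
    linarith
  have hne : (n:ℝ) * ((n:ℝ) - 1) ≠ 0 := by
    have h2n : (2:ℝ) ≤ (n:ℝ) := by exact_mod_cast hn
    have : (0:ℝ) < (n:ℝ) * ((n:ℝ) - 1) := by nlinarith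
    exact ne_of_gt this
  rw [div_mul_eq_mul_div, div_eq_one_iff_eq hne]
  linarith

lemma nthDiameter_nonneg (K : Set ℂ) (n : ℕ) : 0 ≤ nthDiameter K n := by
  apply Real.sSup_nonneg
  rintro x ⟨w, -, rfl⟩
  exact Finset.prod_nonneg fun p _ => Real.rpow_nonneg (norm_nonneg _) _

lemma prod_bound {n : ℕ} (hn : 2 ≤ n) (C : ℝ) (hC : 0 ≤ C) (f : Fin n × Fin n → ℝ)
    (hf0 : ∀ p, 0 ≤ f p)
    (hfC : ∀ p, f p ≤ C) :
    ∏ p ∈ Finset.univ.filter (fun p : Fin n × Fin n => p.1 < p.2),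
      f p ^ ((2 : ℝ) / ((n : ℝ) * ((n : ℝ) - 1))) ≤ C := by
  set e : ℝ := (2 : ℝ) / ((n : ℝ) * ((n : ℝ) - 1)) with he
  have he0 : 0 ≤ e := by
    have h2n : (2:ℝ) ≤ (n:ℝ) := by exact_mod_cast hn
    have : (0:ℝ) ≤ (n:ℝ) * ((n:ℝ) - 1) := by nlinarith
    exact div_nonneg (by norm_num) this
  calc ∏ p ∈ Finset.univ.filter (fun p : Fin n × Fin n => p.1 < p.2), f p ^ e
      ≤ ∏ p ∈ Finset.univ.filter (fun p : Fin n × Fin n => p.1 < p.2), C ^ e :=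
        Finset.prod_le_prod (fun p _ => Real.rpow_nonneg (hf0 p) _)
          (fun p _ => Real.rpow_le_rpow (hf0 p) (hfC p) he0)
    _ = (C ^ e) ^ ((Finset.univ.filter (fun p : Fin n × Fin n => p.1 < p.2)).card : ℕ) :=
        Finset.prod_const _
    _ = C ^ (e * ((Finset.univ.filter (fun p : Fin n × Fin n => p.1 < p.2)).card : ℝ)) := by
        rw [← Real.rpow_natCast (C ^ e) _, ← Real.rpow_mul hC]
    _ = C := by rw [exp_card n hn, Real.rpow_one]

-- boundedness of closed neighbourhoods
lemma closedNbhd_bound (K : Set ℂ) (hK : IsCompact K) (hKne : K.Nonempty) (ε : ℝ) (hε : 0 < ε) :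
    ∃ R : ℝ, 0 ≤ R ∧ ∀ z ∈ closedNbhd K ε, ‖z‖ ≤ R := by
  obtain ⟨R₀, hR₀⟩ := hK.isBounded.subset_closedBall 0
  refine ⟨|R₀| + ε + 1, by positivity, fun z hz => ?_⟩
  have hz' : Metric.infDist z K ≤ ε := hz
  have : Metric.infDist z K < ε + 1 := by linarith
  obtain ⟨q, hqK, hq⟩ := (Metric.infDist_lt_iff hKne).1 this
  have hqb : ‖q‖ ≤ |R₀| := by
    have := hR₀ hqK
    simp only [Metric.mem_closedBall, Complex.dist_eq, sub_zero] at this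
    exact this.trans (le_abs_self _)
  have : ‖z‖ ≤ ‖z - q‖ + ‖q‖ := by
    simpa using norm_add_le (z - q) q
  rw [Complex.dist_eq] at hq
  linarith

lemma nthDiameter_bddAbove (K : Set ℂ) (hK : IsCompact K) (hKne : K.Nonempty)
    (ε : ℝ) (hε : 0 < ε) (n : ℕ) (hn : 2 ≤ n) :
    BddAbove {x : ℝ | ∃ w : Fin n → ℂ, (∀ i, w i ∈ closedNbhd K ε) ∧
      x = ∏ p ∈ Finset.univ.filter (fun p : Fin n × Fin n => p.1 < p.2),
        ‖w p.1 - w p.2‖ ^ ((2 : ℝ) / ((n : ℝ) * ((n : ℝ) - 1)))} := by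
  obtain ⟨R, hR0, hR⟩ := closedNbhd_bound K hK hKne ε hε
  refine ⟨2 * R, ?_⟩
  rintro x ⟨w, hw, rfl⟩
  apply prod_bound hn (2*R) (by positivity)
  · exact fun p => norm_nonneg _
  · intro p
    have h1 := hR _ (hw p.1)
    have h2 := hR _ (hw p.2)
    have h3 : ‖w p.1 - w p.2‖ ≤ ‖w p.1‖ + ‖w p.2‖ := by
      simpa [sub_eq_add_neg] using norm_add_le (w p.1) (-(w p.2))
    linarith

lemma nthDiameter_comparison (K : Set ℂ) (hK : IsCompact K) (hKne : K.Nonempty)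
    (ε₁ ε₂ : ℝ) (h12 : ε₂ < ε₁) (h2 : 0 < ε₂) (n : ℕ) (hn : 2 ≤ n) :
    nthDiameter (closedNbhd K ε₁) n ≤ 2 * (ε₁ / ε₂) * nthDiameter (closedNbhd K ε₂) n := by
  have h1 : 0 < ε₁ := h2.trans h12
  set t : ℝ := ε₂ / ε₁ with htdef
  have ht0 : 0 < t := div_pos h2 h1
  have ht1 : t ≤ 1 := by rw [div_le_one h1]; linarith
  set C : ℝ := 2 * (ε₁ / ε₂) with hCdef
  have hC0 : 0 < C := by positivity
  have hC2t : C = 2 / t := by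
    rw [hCdef, htdef]
    rw [div_div_eq_mul_div]
    field_simp
  set e : ℝ := (2 : ℝ) / ((n : ℝ) * ((n : ℝ) - 1)) with he
  have he0 : 0 ≤ e := by
    have h2n : (2:ℝ) ≤ (n:ℝ) := by exact_mod_cast hn
    have : (0:ℝ) ≤ (n:ℝ) * ((n:ℝ) - 1) := by nlinarith
    exact div_nonneg (by norm_num) this
  have hBdd := nthDiameter_bddAbove K hK hKne ε₂ h2 n hn
  apply Real.sSup_le
  · rintro x ⟨w, hw, rfl⟩
    -- choose nearest points
    have hch : ∀ i : Fin n, ∃ q ∈ K, Metric.infDist (w i) K = dist (w i) q :=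
      fun i => hK.exists_infDist_eq_dist hKne (w i)
    choose q hqK hq using hch
    set v : Fin n → ℂ := fun i => q i + (t:ℂ) * (w i - q i) with hv
    have hvmem : ∀ i, v i ∈ closedNbhd K ε₂ := by
      intro i
      have hvd : v i - q i = (t:ℂ) * (w i - q i) := by
        show q i + (t:ℂ) * (w i - q i) - q i = (t:ℂ) * (w i - q i)
        ring
      have hd : dist (v i) (q i) = t * ‖w i - q i‖ := by
        rw [Complex.dist_eq, hvd, norm_mul, Complex.norm_real, Real.norm_eq_abs, abs_of_pos ht0]
      have h3 : Metric.infDist (v i) K ≤ dist (v i) (q i) :=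
        Metric.infDist_le_dist_of_mem (hqK i)
      have h4 : ‖w i - q i‖ ≤ ε₁ := by
        rw [← Complex.dist_eq, ← hq i]; exact hw i
      have : t * ‖w i - q i‖ ≤ t * ε₁ :=
        mul_le_mul_of_nonneg_left h4 ht0.le
      have ht : t * ε₁ = ε₂ := by rw [htdef]; field_simp
      show Metric.infDist (v i) K ≤ ε₂
      rw [← ht]; rw [hd] at h3; linarith
    have hpair : ∀ i j : Fin n,
        ‖w i - w j‖ ≤ C * ‖v i - v j‖ := by
      intro i j
      have ha : ‖w i - q i‖ ≤ ‖(w i - q i) + (q i - q j)‖ := by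
        have : (w i - q i) + (q i - q j) = w i - q j := by ring
        rw [this, ← Complex.dist_eq, ← Complex.dist_eq, ← hq i]
        exact Metric.infDist_le_dist_of_mem (hqK j)
      have hb : ‖w j - q j‖ ≤ ‖(w j - q j) - (q i - q j)‖ := by
        have : (w j - q j) - (q i - q j) = w j - q i := by ring
        rw [this, ← Complex.dist_eq, ← Complex.dist_eq, ← hq j]
        exact Metric.infDist_le_dist_of_mem (hqK i)
      have key := pair_ineq (w i - q i) (w j - q j) (q i - q j) t ht0 ht1 ha hb
      have e1 : (q i - q j) + ((w i - q i) - (w j - q j)) = w i - w j := by ring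
      have e2 : (q i - q j) + (t:ℂ) * ((w i - q i) - (w j - q j)) = v i - v j := by
        show _ = (q i + (t:ℂ) * (w i - q i)) - (q j + (t:ℂ) * (w j - q j))
        ring
      rw [e1, e2, ← hC2t] at key
      exact key
    -- now the product comparison
    have hy : (∏ p ∈ Finset.univ.filter (fun p : Fin n × Fin n => p.1 < p.2),
        ‖v p.1 - v p.2‖ ^ e) ∈ {x : ℝ | ∃ w : Fin n → ℂ,
          (∀ i, w i ∈ closedNbhd K ε₂) ∧
          x = ∏ p ∈ Finset.univ.filter (fun p : Fin n × Fin n => p.1 < p.2),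
            ‖w p.1 - w p.2‖ ^ e} := ⟨v, hvmem, rfl⟩
    have step1 : ∏ p ∈ Finset.univ.filter (fun p : Fin n × Fin n => p.1 < p.2),
        ‖w p.1 - w p.2‖ ^ e
        ≤ ∏ p ∈ Finset.univ.filter (fun p : Fin n × Fin n => p.1 < p.2),
          (C ^ e * ‖v p.1 - v p.2‖ ^ e) := by
      apply Finset.prod_le_prod (fun p _ => Real.rpow_nonneg (norm_nonneg _) _)
      intro p _
      rw [← Real.mul_rpow hC0.le (norm_nonneg _)]
      exact Real.rpow_le_rpow (norm_nonneg _) (hpair p.1 p.2) he0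
    have step2 : ∏ p ∈ Finset.univ.filter (fun p : Fin n × Fin n => p.1 < p.2),
        (C ^ e * ‖v p.1 - v p.2‖ ^ e)
        = C * ∏ p ∈ Finset.univ.filter (fun p : Fin n × Fin n => p.1 < p.2),
            ‖v p.1 - v p.2‖ ^ e := by
      rw [Finset.prod_mul_distrib, Finset.prod_const,
        ← Real.rpow_natCast (C ^ e) _, ← Real.rpow_mul hC0.le, exp_card n hn, Real.rpow_one]
    have step3 : C * (∏ p ∈ Finset.univ.filter (fun p : Fin n × Fin n => p.1 < p.2),
          ‖v p.1 - v p.2‖ ^ e)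
        ≤ C * nthDiameter (closedNbhd K ε₂) n := by
      apply mul_le_mul_of_nonneg_left _ hC0.le
      exact le_csSup hBdd hy
    calc ∏ p ∈ Finset.univ.filter (fun p : Fin n × Fin n => p.1 < p.2),
        ‖w p.1 - w p.2‖ ^ e ≤ _ := step1
      _ = _ := step2
      _ ≤ C * nthDiameter (closedNbhd K ε₂) n := step3
  · exact mul_nonneg hC0.le (nthDiameter_nonneg _ _)

end aux


/-- Lemma 2.9: `c(K^{ε₁}) ≤ 2 (ε₁/ε₂) c(K^{ε₂})` for `ε₁ > ε₂ > 0`. -/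
theorem stmt7 (K : Set ℂ) (hK : IsCompact K) (hKne : K.Nonempty)
    (ε₁ ε₂ : ℝ) (h12 : ε₂ < ε₁) (h2 : 0 < ε₂) :
    capacity (closedNbhd K ε₁) ≤ 2 * (ε₁ / ε₂) * capacity (closedNbhd K ε₂) := by
  have h1 : 0 < ε₁ := h2.trans h12
  set C : ℝ := 2 * (ε₁ / ε₂) with hCdef
  have hC0 : 0 < C := by positivity
  set f : ℕ → ℝ := fun n => nthDiameter (closedNbhd K ε₁) (n + 2) with hf
  set g : ℕ → ℝ := fun n => nthDiameter (closedNbhd K ε₂) (n + 2) with hg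
  have hfg : ∀ n, f n ≤ C * g n := fun n =>
    nthDiameter_comparison K hK hKne ε₁ ε₂ h12 h2 (n + 2) (by omega)
  have hfb : BddBelow (Set.range f) :=
    ⟨0, by rintro x ⟨n, rfl⟩; exact nthDiameter_nonneg _ _⟩
  have key : (⨅ n, f n) / C ≤ ⨅ n, g n := by
    apply le_ciInf
    intro n
    rw [div_le_iff₀ hC0]
    calc (⨅ n, f n) ≤ f n := ciInf_le hfb n
      _ ≤ C * g n := hfg n
      _ = g n * C := mul_comm _ _
  show (⨅ n, f n) ≤ C * ⨅ n, g n
  rw [div_le_iff₀ hC0] at key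
  linarith [key]
end

section
/- For every nonempty compact set K ⊆ ℂ and every integer n ≥ 2, one has (1/(n(n−1)))^{1/(n−1)} · δ_n(K^{1/n}) ≤ c(K^{1/(n−1)})^{n/(n−1)}, where δ_n is the n-th diameter and c the transfinite diameter (logarithmic capacity). -/
noncomputable def Complex.abs : AbsoluteValue ℂ ℝ :=
  IsAbsoluteValue.toAbsoluteValue (norm : ℂ → ℝ)

theorem Complex.abs_apply (z : ℂ) : Complex.abs z = ‖z‖ := rfl

theorem Complex.abs_ofReal (r : ℝ) : Complex.abs (r : ℂ) = |r| := by
  rw [Complex.abs_apply, Complex.norm_real, Real.norm_eq_abs]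

theorem Complex.abs_natCast (k : ℕ) : Complex.abs (k : ℂ) = k := by
  rw [Complex.abs_apply, Complex.norm_natCast]

theorem Complex.abs_exp (z : ℂ) : Complex.abs (Complex.exp z) = Real.exp z.re := by
  rw [Complex.abs_apply, Complex.norm_exp]



open Finset Polynomial

namespace S9

noncomputable def em (m : ℕ) : ℝ := 2 / ((m : ℝ) * ((m : ℝ) - 1))

def pairs (m : ℕ) : Finset (Fin m × Fin m) := Finset.univ.filter (fun p => p.1 < p.2)

noncomputable def praw {m : ℕ} (w : Fin m → ℂ) : ℝ :=
  ∏ p ∈ pairs m, Complex.abs (w p.1 - w p.2)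

lemma praw_nonneg {m : ℕ} (w : Fin m → ℂ) : 0 ≤ praw w :=
  Finset.prod_nonneg fun _ _ => Complex.abs.nonneg _

noncomputable def dval (m : ℕ) (w : Fin m → ℂ) : ℝ := praw w ^ em m

lemma dval_nonneg {m : ℕ} (w : Fin m → ℂ) : 0 ≤ dval m w :=
  Real.rpow_nonneg (praw_nonneg w) _

def dset (S : Set ℂ) (m : ℕ) : Set ℝ :=
  {x | ∃ w : Fin m → ℂ, (∀ i, w i ∈ S) ∧ x = dval m w}

lemma nthDiameter_eq (S : Set ℂ) (m : ℕ) : nthDiameter S m = sSup (dset S m) := by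
  unfold nthDiameter dset dval praw pairs em
  congr 1
  ext x
  constructor
  · rintro ⟨w, hw, rfl⟩
    exact ⟨w, hw, by simp only [Complex.abs_apply]; rw [Real.finset_prod_rpow _ _ (fun i _ => norm_nonneg _)]⟩
  · rintro ⟨w, hw, rfl⟩
    exact ⟨w, hw, by simp only [Complex.abs_apply]; rw [Real.finset_prod_rpow _ _ (fun i _ => norm_nonneg _)]⟩

lemma em_pos {m : ℕ} (hm : 2 ≤ m) : 0 < em m := by
  have : (2:ℝ) ≤ (m:ℝ) := by exact_mod_cast hm
  apply div_pos two_pos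
  nlinarith

lemma offDiag_eq_pairs_union (m : ℕ) :
    (Finset.univ : Finset (Fin m)).offDiag
      = (pairs m) ∪ ((Finset.univ : Finset (Fin m × Fin m)).filter (fun p => p.2 < p.1)) := by
  ext q
  simp only [Finset.mem_offDiag, Finset.mem_union, Finset.mem_filter, Finset.mem_univ,
    true_and, pairs]
  constructor
  · intro hq
    exact lt_or_gt_of_ne hq
  · intro h
    rcases h with h | h
    · exact ne_of_lt h
    · exact (ne_of_lt h).symm

lemma disjoint_pairs (m : ℕ) :
    Disjoint (pairs m) ((Finset.univ : Finset (Fin m × Fin m)).filter (fun p => p.2 < p.1)) := by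
  rw [Finset.disjoint_left]
  intro p hp hp'
  simp only [pairs, Finset.mem_filter] at hp hp'
  exact absurd (hp.2.trans hp'.2) (lt_irrefl _)

lemma card_pairs_swap (m : ℕ) :
    ((Finset.univ : Finset (Fin m × Fin m)).filter (fun p => p.2 < p.1)).card
      = (pairs m).card := by
  apply Finset.card_nbij (fun p => (p.2, p.1))
  · intro p hp; simp only [pairs, Finset.mem_coe, Finset.mem_filter, Finset.mem_univ, true_and] at *; exact hp
  · intro p hp q hq h
    simp only [Prod.mk.injEq] at h
    exact Prod.ext h.2 h.1
  · intro q hq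
    refine ⟨(q.2, q.1), ?_, rfl⟩
    simp only [pairs, Finset.coe_filter, Finset.mem_univ, Set.mem_setOf_eq, true_and] at *
    exact hq

lemma two_mul_card_pairs (m : ℕ) : 2 * (pairs m).card = m * m - m := by
  have h1 : ((Finset.univ : Finset (Fin m)).offDiag).card = m * m - m := by
    rw [Finset.offDiag_card]; simp
  rw [offDiag_eq_pairs_union, Finset.card_union_of_disjoint (disjoint_pairs m),
    card_pairs_swap] at h1
  omega

lemma card_pairs_real (m : ℕ) : ((pairs m).card : ℝ) = (m:ℝ) * ((m:ℝ) - 1) / 2 := by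
  have h := two_mul_card_pairs m
  have h2 : (m:ℕ) ≤ m * m := by nlinarith
  have h3 : ((2 * (pairs m).card : ℕ) : ℝ) = ((m*m - m : ℕ) : ℝ) := by rw [h]
  rw [Nat.cast_mul, Nat.cast_sub h2] at h3
  push_cast at h3
  linarith

-- core combinatorial identity

lemma prod_succAbove (m : ℕ) (f : Fin (m+1) → Fin (m+1) → ℝ) :
    ∏ i : Fin (m+1), ∏ p ∈ pairs m, f (Fin.succAbove i p.1) (Fin.succAbove i p.2)
      = ∏ q ∈ pairs (m+1), f q.1 q.2 ^ (m - 1) := by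
  classical
  have step1 : ∀ i : Fin (m+1), ∏ p ∈ pairs m, f (Fin.succAbove i p.1) (Fin.succAbove i p.2)
      = ∏ q ∈ (pairs (m+1)).filter (fun q => q.1 ≠ i ∧ q.2 ≠ i), f q.1 q.2 := by
    intro i
    apply Finset.prod_nbij (fun p => (i.succAbove p.1, i.succAbove p.2))
    · intro p hp
      simp only [pairs, Finset.coe_filter, Finset.mem_univ, true_and, Set.mem_setOf_eq,
        Finset.mem_filter] at *
      exact ⟨Fin.succAbove_lt_succAbove_iff.mpr hp, Fin.succAbove_ne i p.1,
        Fin.succAbove_ne i p.2⟩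
    · intro p _ q _ h
      simp only [Prod.mk.injEq] at h
      exact Prod.ext (Fin.succAbove_right_injective h.1) (Fin.succAbove_right_injective h.2)
    · intro q hq
      simp only [pairs, Finset.coe_filter, Finset.mem_univ, true_and, Set.mem_setOf_eq,
        Finset.mem_filter] at hq
      obtain ⟨hlt, h1, h2⟩ := hq
      obtain ⟨a, ha⟩ := Fin.exists_succAbove_eq h1
      obtain ⟨b, hb⟩ := Fin.exists_succAbove_eq h2
      refine ⟨(a, b), ?_, ?_⟩
      · simp only [pairs, Finset.coe_filter, Finset.mem_univ, true_and, Set.mem_setOf_eq]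
        rw [← Fin.succAbove_lt_succAbove_iff (p := i), ha, hb]
        exact hlt
      · simp [ha, hb]
    · intro p _; rfl
  calc ∏ i : Fin (m+1), ∏ p ∈ pairs m, f (Fin.succAbove i p.1) (Fin.succAbove i p.2)
      = ∏ i : Fin (m+1), ∏ q ∈ (pairs (m+1)).filter (fun q => q.1 ≠ i ∧ q.2 ≠ i), f q.1 q.2 := by
        exact Finset.prod_congr rfl fun i _ => step1 i
    _ = ∏ q ∈ pairs (m+1), ∏ i ∈ Finset.univ.filter (fun i => q.1 ≠ i ∧ q.2 ≠ i), f q.1 q.2 := by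
        apply Finset.prod_comm'
        intro i q
        simp only [Finset.mem_univ, true_and, Finset.mem_filter, and_comm]
    _ = ∏ q ∈ pairs (m+1), f q.1 q.2 ^ (m - 1) := by
        apply Finset.prod_congr rfl
        intro q hq
        rw [Finset.prod_const]
        congr 1
        have hne : q.1 ≠ q.2 := by
          simp only [pairs, Finset.mem_filter] at hq
          exact ne_of_lt hq.2
        have : Finset.univ.filter (fun i => q.1 ≠ i ∧ q.2 ≠ i)
            = (Finset.univ : Finset (Fin (m+1))) \ {q.1, q.2} := by
          ext i
          simp only [Finset.mem_filter, Finset.mem_univ, true_and, Finset.mem_sdiff,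
            Finset.mem_insert, Finset.mem_singleton]
          constructor
          · rintro ⟨h1, h2⟩ 
            push_neg
            exact ⟨fun h => h1 h.symm, fun h => h2 h.symm⟩
          · intro h
            push_neg at h
            exact ⟨fun hh => h.1 hh.symm, fun hh => h.2 hh.symm⟩
        rw [this, Finset.card_sdiff_of_subset (Finset.subset_univ _)]
        rw [Finset.card_insert_of_notMem (by simpa using hne), Finset.card_singleton]
        simp


lemma em_nonneg (m : ℕ) : 0 ≤ em m := by
  rcases Nat.eq_zero_or_pos m with h | h
  · simp [em, h]
  · apply div_nonneg (by norm_num)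
    have : (1:ℝ) ≤ (m:ℝ) := by exact_mod_cast h
    nlinarith

lemma exists_bound (S : Set ℂ) (hS : Bornology.IsBounded S) :
    ∃ R : ℝ, 0 ≤ R ∧ ∀ z ∈ S, ∀ z' ∈ S, Complex.abs (z - z') ≤ R := by
  obtain ⟨C, hC⟩ := Metric.isBounded_iff.mp hS
  refine ⟨max C 0, le_max_right _ _, fun z hz z' hz' => ?_⟩
  have := hC hz hz'
  rw [Complex.dist_eq] at this
  exact this.trans (le_max_left _ _)

lemma bddAbove_dset (S : Set ℂ) (m : ℕ) (hS : Bornology.IsBounded S) :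
    BddAbove (dset S m) := by
  obtain ⟨R, hR0, hR⟩ := exists_bound S hS
  refine ⟨(R ^ (pairs m).card) ^ em m, ?_⟩
  rintro x ⟨w, hw, rfl⟩
  apply Real.rpow_le_rpow (praw_nonneg w) _ (em_nonneg m)
  have : praw w ≤ ∏ _p ∈ pairs m, R := by
    apply Finset.prod_le_prod (fun _ _ => Complex.abs.nonneg _)
    intro p _
    exact hR _ (hw p.1) _ (hw p.2)
  simpa using this

lemma dval_le_nthDiameter {S : Set ℂ} {m : ℕ} (hS : Bornology.IsBounded S)
    (w : Fin m → ℂ) (hw : ∀ i, w i ∈ S) : dval m w ≤ nthDiameter S m := by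
  rw [nthDiameter_eq]
  exact le_csSup (bddAbove_dset S m hS) ⟨w, hw, rfl⟩

lemma nthDiameter_nonneg {S : Set ℂ} (hS : Bornology.IsBounded S) (hne : S.Nonempty)
    (m : ℕ) : 0 ≤ nthDiameter S m := by
  obtain ⟨z, hz⟩ := hne
  exact le_trans (dval_nonneg _) (dval_le_nthDiameter hS (fun _ => z) (fun _ => hz))

lemma nthDiameter_succ_le {S : Set ℂ} (hS : Bornology.IsBounded S) (hne : S.Nonempty)
    {m : ℕ} (hm : 2 ≤ m) : nthDiameter S (m + 1) ≤ nthDiameter S m := by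
  have hm0 : (m:ℝ) ≠ 0 := by positivity
  have hm1 : (m:ℝ) - 1 ≠ 0 := by
    have : (2:ℝ) ≤ (m:ℝ) := by exact_mod_cast hm
    intro h; linarith
  rw [nthDiameter_eq S (m+1)]
  apply Real.sSup_le _ (nthDiameter_nonneg hS hne m)
  rintro x ⟨w, hw, rfl⟩
  set d0 := nthDiameter S m with hd0def
  have hd0 : 0 ≤ d0 := nthDiameter_nonneg hS hne m
  have key : dval (m+1) w ^ (m+1) = ∏ i : Fin (m+1), dval m (w ∘ Fin.succAbove i) := by
    have h1 : ∏ i : Fin (m+1), dval m (w ∘ Fin.succAbove i)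
        = (∏ i : Fin (m+1), praw (w ∘ Fin.succAbove i)) ^ em m := by
      unfold dval
      rw [Real.finset_prod_rpow _ _ (fun i _ => praw_nonneg _)]
    have h2 : ∏ i : Fin (m+1), praw (w ∘ Fin.succAbove i) = praw w ^ (m - 1) := by
      unfold praw
      rw [← Finset.prod_pow]
      simpa [Function.comp] using prod_succAbove m (fun a b => Complex.abs (w a - w b))
    rw [h1, h2]
    unfold dval
    rw [← Real.rpow_natCast (praw w ^ em (m+1)) (m+1), ← Real.rpow_natCast (praw w) (m-1),
      ← Real.rpow_mul (praw_nonneg w), ← Real.rpow_mul (praw_nonneg w)]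
    congr 1
    have hcast : ((m - 1 : ℕ) : ℝ) = (m:ℝ) - 1 := by
      have : (1:ℕ) ≤ m := le_trans (by norm_num) hm
      push_cast [Nat.cast_sub this]
      ring
    unfold em
    rw [hcast]
    push_cast
    field_simp
    ring_nf
    exact mul_inv_cancel₀ hm0
  have hle : ∏ i : Fin (m+1), dval m (w ∘ Fin.succAbove i) ≤ d0 ^ (m+1) := by
    calc ∏ i : Fin (m+1), dval m (w ∘ Fin.succAbove i)
        ≤ ∏ _i : Fin (m+1), d0 := by
          apply Finset.prod_le_prod (fun _ _ => dval_nonneg _)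
          intro i _
          exact dval_le_nthDiameter hS _ (fun a => hw _)
      _ = d0 ^ (m+1) := by simp
  have : dval (m+1) w ^ (m+1) ≤ d0 ^ (m+1) := key ▸ hle
  exact (pow_le_pow_iff_left₀ (dval_nonneg _) hd0 (Nat.succ_ne_zero m)).mp this

lemma nthDiameter_antitone {S : Set ℂ} (hS : Bornology.IsBounded S) (hne : S.Nonempty)
    {a b : ℕ} (ha : 2 ≤ a) (hab : a ≤ b) : nthDiameter S b ≤ nthDiameter S a := by
  induction b, hab using Nat.le_induction with
  | base => exact le_refl _
  | succ b hab ih => exact le_trans (nthDiameter_succ_le hS hne (le_trans ha hab)) ih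



section OffDiag
variable {α β : Type*} [Fintype α] [Fintype β] [DecidableEq α] [DecidableEq β]

lemma prod_offDiag_sq [LinearOrder α] (f : α → α → ℝ) (hsym : ∀ a b, f a b = f b a) :
    ∏ q ∈ (Finset.univ : Finset α).offDiag, f q.1 q.2
      = (∏ p ∈ Finset.univ.filter (fun p : α × α => p.1 < p.2), f p.1 p.2) ^ 2 := by
  have hunion : (Finset.univ : Finset α).offDiag
      = (Finset.univ.filter (fun p : α × α => p.1 < p.2))
        ∪ (Finset.univ.filter (fun p : α × α => p.2 < p.1)) := by
    ext q
    simp only [Finset.mem_offDiag, Finset.mem_union, Finset.mem_filter, Finset.mem_univ,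
      true_and]
    constructor
    · intro hq; exact lt_or_gt_of_ne hq
    · intro h
      rcases h with h | h
      · exact ne_of_lt h
      · exact (ne_of_lt h).symm
  have hdisj : Disjoint (Finset.univ.filter (fun p : α × α => p.1 < p.2))
      (Finset.univ.filter (fun p : α × α => p.2 < p.1)) := by
    rw [Finset.disjoint_left]
    intro p hp hp'
    simp only [Finset.mem_filter] at hp hp'
    exact absurd (hp.2.trans hp'.2) (lt_irrefl _)
  have hswap : ∏ p ∈ Finset.univ.filter (fun p : α × α => p.2 < p.1), f p.1 p.2
      = ∏ p ∈ Finset.univ.filter (fun p : α × α => p.1 < p.2), f p.1 p.2 := by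
    apply Finset.prod_nbij (fun p => (p.2, p.1))
    · intro p hp
      simp only [Finset.mem_coe, Finset.mem_filter, Finset.mem_univ, true_and] at *
      exact hp
    · intro p _ q _ h
      simp only [Prod.mk.injEq] at h
      exact Prod.ext h.2 h.1
    · intro q hq
      refine ⟨(q.2, q.1), ?_, rfl⟩
      simp only [Finset.mem_coe, Finset.mem_filter, Finset.mem_univ, true_and] at *
      exact hq
    · intro p _
      exact hsym p.1 p.2
  rw [hunion, Finset.prod_union hdisj, hswap, sq]

lemma prod_offDiag_equiv (e : α ≃ β) (f : β → β → ℝ) :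
    ∏ q ∈ (Finset.univ : Finset β).offDiag, f q.1 q.2
      = ∏ q ∈ (Finset.univ : Finset α).offDiag, f (e q.1) (e q.2) := by
  apply Finset.prod_nbij (fun q : β × β => (e.symm q.1, e.symm q.2))
  · intro q hq
    simp only [Finset.mem_coe, Finset.mem_offDiag, Finset.mem_univ, true_and] at *
    exact fun h => hq (by simpa using congrArg e h)
  · intro q _ q' _ h
    simp only [Prod.mk.injEq] at h
    exact Prod.ext (by simpa using congrArg e h.1) (by simpa using congrArg e h.2)
  · intro q hq
    refine ⟨(e q.1, e q.2), ?_, by simp⟩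
    simp only [Finset.mem_coe, Finset.mem_offDiag, Finset.mem_univ, true_and] at *
    exact fun h => hq (by simpa using congrArg e.symm h)
  · intro q _
    simp

lemma prod_offDiag_prod_split (g : α × β → α × β → ℝ) :
    ∏ q ∈ (Finset.univ : Finset (α × β)).offDiag, g q.1 q.2
      = (∏ i : α, ∏ ab ∈ (Finset.univ : Finset β).offDiag, g (i, ab.1) (i, ab.2))
        * ∏ ij ∈ (Finset.univ : Finset α).offDiag, ∏ a : β, ∏ b : β, g (ij.1, a) (ij.2, b) := by
  classical
  rw [← Finset.prod_filter_mul_prod_filter_not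
    ((Finset.univ : Finset (α × β)).offDiag) (fun q => q.1.1 = q.2.1)]
  congr 1
  · -- same first coordinate
    rw [← Finset.prod_product']
    apply Finset.prod_nbij' (fun q => (q.1.1, (q.1.2, q.2.2)))
      (fun x => ((x.1, x.2.1), (x.1, x.2.2)))
    · intro q hq
      simp only [Finset.mem_filter, Finset.mem_offDiag, Finset.mem_univ, true_and] at hq
      simp only [Finset.mem_product, Finset.mem_univ, Finset.mem_offDiag, true_and]
      obtain ⟨hne, heq⟩ := hq
      intro h
      exact hne (Prod.ext heq (by exact h))
    · intro x hx
      simp only [Finset.mem_product, Finset.mem_univ, Finset.mem_offDiag, true_and] at hx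
      simp only [Finset.mem_filter, Finset.mem_offDiag, Finset.mem_univ, true_and]
      exact ⟨fun h => hx (congrArg Prod.snd h), trivial⟩
    · intro q hq
      simp only [Finset.mem_filter, Finset.mem_offDiag, Finset.mem_univ, true_and] at hq
      obtain ⟨-, heq⟩ := hq
      ext <;> simp [heq.symm]
    · intro x _
      rfl
    · intro q hq
      simp only [Finset.mem_filter, Finset.mem_offDiag, Finset.mem_univ, true_and] at hq
      obtain ⟨-, heq⟩ := hq
      rw [show q.1 = (q.1.1, q.1.2) from rfl, show q.2 = (q.2.1, q.2.2) from rfl, ← heq]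
  · -- different first coordinates
    have h2 : ∏ x ∈ (((Finset.univ : Finset α).offDiag) ×ˢ
          ((Finset.univ ×ˢ Finset.univ) : Finset (β × β))),
        g (x.1.1, x.2.1) (x.1.2, x.2.2)
        = ∏ ij ∈ (Finset.univ : Finset α).offDiag, ∏ a : β, ∏ b : β,
            g (ij.1, a) (ij.2, b) := by
      rw [Finset.prod_product'
        (f := fun (p : α × α) (q : β × β) => g (p.1, q.1) (p.2, q.2))]
      refine Finset.prod_congr rfl fun ij _ => ?_
      rw [Finset.prod_product' (f := fun (a : β) (b : β) => g (ij.1, a) (ij.2, b))]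
    rw [← h2]
    apply Finset.prod_nbij' (fun q => ((q.1.1, q.2.1), (q.1.2, q.2.2)))
      (fun x => ((x.1.1, x.2.1), (x.1.2, x.2.2)))
    · intro q hq
      simp only [Finset.mem_filter, Finset.mem_offDiag, Finset.mem_univ, true_and] at hq
      simp only [Finset.mem_product, Finset.mem_univ, Finset.mem_offDiag, true_and]
      exact ⟨hq.2, trivial⟩
    · intro x hx
      simp only [Finset.mem_product, Finset.mem_univ, Finset.mem_offDiag, true_and] at hx
      simp only [Finset.mem_filter, Finset.mem_offDiag, Finset.mem_univ, true_and]
      refine ⟨fun h => hx.1 (congrArg Prod.fst h), hx.1⟩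
    · intro q _; rfl
    · intro x _; rfl
    · intro q _; rfl

end OffDiag


lemma abs_nthRoot {k : ℕ} (hk : 0 < k) {η : ℂ} (hη : η ∈ nthRootsFinset k (1:ℂ)) :
    Complex.abs η = 1 := by
  have h1 : η ^ k = 1 := (Polynomial.mem_nthRootsFinset hk (1:ℂ)).mp hη
  have h2 : Complex.abs η ^ k = 1 := by
    rw [← map_pow, h1, map_one]
  have h3 : 0 ≤ Complex.abs η := Complex.abs.nonneg η
  rcases lt_trichotomy (Complex.abs η) 1 with h | h | h
  · exfalso
    have := pow_lt_one₀ h3 h hk.ne'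
    rw [h2] at this
    exact lt_irrefl 1 this
  · exact h
  · exfalso
    have := one_lt_pow₀ h hk.ne'
    rw [h2] at this
    exact lt_irrefl 1 this

lemma prod_sub_nthRoots {k : ℕ} (hk : 0 < k) {η : ℂ} (hη : η ∈ nthRootsFinset k (1:ℂ)) :
    Complex.abs (∏ η' ∈ (nthRootsFinset k (1:ℂ)).erase η, (η - η')) = k := by
  classical
  have hζ : IsPrimitiveRoot (Complex.exp (2 * Real.pi * Complex.I / k)) k :=
    Complex.isPrimitiveRoot_exp k hk.ne'
  have hfact : (X : ℂ[X]) ^ k - 1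
      = (X - C η) * ∏ η' ∈ (nthRootsFinset k (1:ℂ)).erase η, (X - C η') := by
    rw [X_pow_sub_one_eq_prod hk hζ, ← Finset.mul_prod_erase _ _ hη]
  set G : ℂ[X] := ∏ η' ∈ (nthRootsFinset k (1:ℂ)).erase η, (X - C η') with hG
  have hder : (C (k:ℂ)) * X ^ (k-1) = G + (X - C η) * derivative G := by
    have := congrArg derivative hfact
    rwa [derivative_sub, derivative_one, derivative_X_pow, sub_zero, derivative_mul,
      derivative_sub, derivative_X, derivative_C, sub_zero, one_mul] at this
  have heval : (k:ℂ) * η ^ (k-1) = G.eval η := by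
    have := congrArg (Polynomial.eval η) hder
    simpa using this
  have hG_eval : G.eval η = ∏ η' ∈ (nthRootsFinset k (1:ℂ)).erase η, (η - η') := by
    simp [hG, eval_prod]
  rw [← hG_eval, ← heval]
  rw [map_mul, map_pow, abs_nthRoot hk hη]
  simp [Complex.abs_natCast]

lemma vandermonde_ge_one {k : ℕ} (hk : 0 < k) :
    1 ≤ ∏ q ∈ (nthRootsFinset k (1:ℂ)).offDiag, Complex.abs (q.1 - q.2) := by
  classical
  have h1 : ∏ q ∈ (nthRootsFinset k (1:ℂ)).offDiag, Complex.abs (q.1 - q.2)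
      = ∏ η ∈ nthRootsFinset k (1:ℂ), ∏ η' ∈ (nthRootsFinset k (1:ℂ)).erase η,
          Complex.abs (η - η') := by
    rw [← Finset.prod_sigma (nthRootsFinset k (1:ℂ)) (fun a => (nthRootsFinset k (1:ℂ)).erase a)
      (fun x => Complex.abs (x.1 - x.2))]
    apply Finset.prod_nbij (fun q => (⟨q.1, q.2⟩ : (_ : ℂ) × ℂ))
    · intro q hq
      simp only [Finset.mem_coe, Finset.mem_offDiag] at hq
      simp only [Finset.mem_coe, Finset.mem_sigma, Finset.mem_erase]
      exact ⟨hq.1, Ne.symm hq.2.2, hq.2.1⟩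
    · intro q _ q' _ h
      obtain ⟨h1, h2⟩ := Sigma.mk.inj_iff.mp h
      exact Prod.ext h1 (eq_of_heq h2)
    · intro x hx
      simp only [Finset.mem_coe, Finset.mem_sigma, Finset.mem_erase] at hx
      refine ⟨(x.1, x.2), ?_, rfl⟩
      simp only [Finset.mem_coe, Finset.mem_offDiag]
      exact ⟨hx.1, hx.2.2, Ne.symm hx.2.1⟩
    · intro q _; rfl
  rw [h1]
  have h2 : ∀ η ∈ nthRootsFinset k (1:ℂ),
      ∏ η' ∈ (nthRootsFinset k (1:ℂ)).erase η, Complex.abs (η - η') = k := by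
    intro η hη
    rw [← map_prod]
    exact prod_sub_nthRoots hk hη
  rw [Finset.prod_congr rfl h2, Finset.prod_const]
  have h4 : (1:ℝ) ≤ (k:ℝ) := by exact_mod_cast hk
  calc (1:ℝ) = 1 ^ (nthRootsFinset k (1:ℂ)).card := by simp
    _ ≤ (k:ℝ) ^ (nthRootsFinset k (1:ℂ)).card := pow_le_pow_left₀ (by norm_num) h4 _



def IsPolyFun (F : ℂ → ℂ) : Prop := ∃ P : Polynomial ℂ, ∀ z, F z = P.eval z

lemma IsPolyFun.const (c : ℂ) : IsPolyFun (fun _ => c) := ⟨C c, by simp⟩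

lemma IsPolyFun.id : IsPolyFun (fun z => z) := ⟨X, by simp⟩

lemma IsPolyFun.add {F G : ℂ → ℂ} (hF : IsPolyFun F) (hG : IsPolyFun G) :
    IsPolyFun (fun z => F z + G z) := by
  obtain ⟨P, hP⟩ := hF; obtain ⟨Q, hQ⟩ := hG
  exact ⟨P + Q, fun z => by simp [hP, hQ]⟩

lemma IsPolyFun.sub {F G : ℂ → ℂ} (hF : IsPolyFun F) (hG : IsPolyFun G) :
    IsPolyFun (fun z => F z - G z) := by
  obtain ⟨P, hP⟩ := hF; obtain ⟨Q, hQ⟩ := hG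
  exact ⟨P - Q, fun z => by simp [hP, hQ]⟩

lemma IsPolyFun.mul {F G : ℂ → ℂ} (hF : IsPolyFun F) (hG : IsPolyFun G) :
    IsPolyFun (fun z => F z * G z) := by
  obtain ⟨P, hP⟩ := hF; obtain ⟨Q, hQ⟩ := hG
  exact ⟨P * Q, fun z => by simp [hP, hQ]⟩

lemma IsPolyFun.pow {F : ℂ → ℂ} (hF : IsPolyFun F) (k : ℕ) :
    IsPolyFun (fun z => F z ^ k) := by
  obtain ⟨P, hP⟩ := hF
  exact ⟨P ^ k, fun z => by simp [hP]⟩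

lemma IsPolyFun.prod {ι : Type*} (s : Finset ι) (F : ι → ℂ → ℂ)
    (h : ∀ i ∈ s, IsPolyFun (F i)) : IsPolyFun (fun z => ∏ i ∈ s, F i z) := by
  classical
  induction s using Finset.induction_on with
  | empty => exact ⟨1, by simp⟩
  | @insert a s' ha ih =>
      rw [Finset.forall_mem_insert] at h
      obtain ⟨P, hP⟩ := h.1
      obtain ⟨Q, hQ⟩ := ih h.2
      refine ⟨P * Q, fun z => ?_⟩
      simp only [Finset.prod_insert ha, eval_mul, ← hP, ← hQ]

/-- discrete maximum-modulus: a polynomial function attains at least `|F 0|` somewhere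
on any circle centered at the origin. -/
lemma exists_on_circle (F : ℂ → ℂ) (hF : IsPolyFun F) {r : ℝ} (hr : 0 < r) :
    ∃ c : ℂ, Complex.abs c = r ∧ Complex.abs (F 0) ≤ Complex.abs (F c) := by
  classical
  obtain ⟨P, hP⟩ := hF
  set M := P.natDegree + 1 with hM
  set ζ : ℂ := Complex.exp (2 * Real.pi * Complex.I / M) with hζdef
  have hζ : IsPrimitiveRoot ζ M := Complex.isPrimitiveRoot_exp M (Nat.succ_ne_zero _)
  have habs : Complex.abs ζ = 1 := by
    rw [hζdef, Complex.abs_exp]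
    norm_num [Complex.div_re, Complex.mul_re, Complex.mul_im]
  have hsum : ∑ t ∈ Finset.range M, P.eval ((r:ℂ) * ζ ^ t) = (M : ℂ) * P.eval 0 := by
    have heval : ∀ t, P.eval ((r:ℂ) * ζ ^ t)
        = ∑ s ∈ Finset.range M, P.coeff s * (r:ℂ) ^ s * (ζ ^ s) ^ t := by
      intro t
      rw [Polynomial.eval_eq_sum_range]
      apply Finset.sum_congr rfl
      intro s _
      rw [mul_pow, ← pow_mul, mul_comm t s, pow_mul]
      ring
    calc ∑ t ∈ Finset.range M, P.eval ((r:ℂ) * ζ ^ t)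
        = ∑ t ∈ Finset.range M, ∑ s ∈ Finset.range M,
            P.coeff s * (r:ℂ) ^ s * (ζ ^ s) ^ t := Finset.sum_congr rfl (fun t _ => heval t)
      _ = ∑ s ∈ Finset.range M, ∑ t ∈ Finset.range M,
            P.coeff s * (r:ℂ) ^ s * (ζ ^ s) ^ t := Finset.sum_comm
      _ = ∑ s ∈ Finset.range M,
            (P.coeff s * (r:ℂ) ^ s) * ∑ t ∈ Finset.range M, (ζ ^ s) ^ t := by
            apply Finset.sum_congr rfl; intro s _; simp [Finset.mul_sum, mul_assoc]
      _ = (M : ℂ) * P.eval 0 := by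
          rw [Finset.sum_eq_single 0]
          · simp [← Polynomial.coeff_zero_eq_eval_zero]; ring
          · intro s hs hs0
            have hsM : s < M := Finset.mem_range.mp hs
            have hsp : 0 < s := Nat.pos_of_ne_zero hs0
            have hne1 : ζ ^ s ≠ 1 := hζ.pow_ne_one_of_pos_of_lt hsp.ne' hsM
            rw [geom_sum_eq hne1, ← pow_mul, mul_comm s M, pow_mul, hζ.pow_eq_one,
              one_pow]
            simp
          · intro h; exact absurd (Finset.mem_range.mpr (Nat.succ_pos _)) h
  by_contra hcon
  push_neg at hcon
  have hlt : ∀ t ∈ Finset.range M, Complex.abs (P.eval ((r:ℂ) * ζ ^ t))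
      < Complex.abs (P.eval 0) := by
    intro t _
    have hc : Complex.abs ((r:ℂ) * ζ ^ t) = r := by
      rw [map_mul, map_pow, habs, one_pow, mul_one, Complex.abs_ofReal, abs_of_pos hr]
    have := hcon _ hc
    rwa [hP, hP] at this
  have h1 : Complex.abs (∑ t ∈ Finset.range M, P.eval ((r:ℂ) * ζ ^ t))
      ≤ ∑ t ∈ Finset.range M, Complex.abs (P.eval ((r:ℂ) * ζ ^ t)) :=
    Complex.abs.sum_le _ _
  have h2 : ∑ t ∈ Finset.range M, Complex.abs (P.eval ((r:ℂ) * ζ ^ t))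
      < ∑ _t ∈ Finset.range M, Complex.abs (P.eval 0) :=
    Finset.sum_lt_sum_of_nonempty (by simp [hM]) hlt
  rw [hsum, map_mul, Complex.abs_natCast] at h1
  simp only [Finset.sum_const, Finset.card_range, nsmul_eq_mul] at h2
  have : (M:ℝ) * Complex.abs (P.eval 0) < (M:ℝ) * Complex.abs (P.eval 0) :=
    lt_of_le_of_lt h1 h2
  exact lt_irrefl _ this

noncomputable def Gc (k : ℕ) (d x y : ℂ) : ℂ :=
  ∏ η ∈ nthRootsFinset k (1:ℂ), ((d + x * η) ^ k - y ^ k)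

noncomputable def Phi {n : ℕ} (k : ℕ) (w : Fin n → ℂ) (u : Fin n → ℂ) : ℂ :=
  ∏ ij ∈ (Finset.univ : Finset (Fin n)).offDiag, Gc k (w ij.1 - w ij.2) (u ij.1) (u ij.2)

lemma exists_phase {n k : ℕ} (w : Fin n → ℂ) {r : ℝ} (hr : 0 < r) :
    ∃ u : Fin n → ℂ, (∀ i, Complex.abs (u i) = r) ∧
      Complex.abs (Phi k w (fun _ => 0)) ≤ Complex.abs (Phi k w u) := by
  classical
  suffices h : ∀ s : Finset (Fin n), ∃ u : Fin n → ℂ,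
      (∀ i ∈ s, Complex.abs (u i) = r) ∧ (∀ i ∉ s, u i = 0) ∧
      Complex.abs (Phi k w (fun _ => 0)) ≤ Complex.abs (Phi k w u) by
    obtain ⟨u, h1, _, h3⟩ := h Finset.univ
    exact ⟨u, fun i => h1 i (Finset.mem_univ i), h3⟩
  intro s
  induction s using Finset.induction_on with
  | empty => exact ⟨fun _ => 0, by simp, fun _ _ => rfl, le_refl _⟩
  | @insert a s ha ih =>
      obtain ⟨u, h1, h2, h3⟩ := ih
      have hF : IsPolyFun (fun c => Phi k w (Function.update u a c)) := by
        have hc : ∀ j, IsPolyFun (fun c => Function.update u a c j) := by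
          intro j
          rcases eq_or_ne j a with rfl | hja
          · simpa using IsPolyFun.id
          · simpa [Function.update_of_ne hja] using IsPolyFun.const (u j)
        unfold Phi Gc
        apply IsPolyFun.prod
        intro ij _
        apply IsPolyFun.prod
        intro η _
        exact (((IsPolyFun.const _).add ((hc ij.1).mul (IsPolyFun.const η))).pow k).sub
          ((hc ij.2).pow k)
      obtain ⟨c, hc_abs, hc_le⟩ := exists_on_circle _ hF hr
      refine ⟨Function.update u a c, ?_, ?_, ?_⟩
      · intro i hi
        rcases Finset.mem_insert.mp hi with rfl | his
        · rwa [Function.update_self]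
        · rw [Function.update_of_ne (by rintro rfl; exact ha his)]
          exact h1 i his
      · intro i hi
        rw [Function.update_of_ne (fun h => hi (by rw [h]; exact Finset.mem_insert_self _ _))]
        exact h2 i (fun his => hi (Finset.mem_insert_of_mem his))
      · have h0 : Function.update u a 0 = u := by
          nth_rewrite 1 [← h2 a ha]
          exact Function.update_eq_self a u
        refine h3.trans ?_
        have : Phi k w u = Phi k w (Function.update u a 0) := by rw [h0]
        rw [this]
        exact hc_le

lemma cross_prod_eq {k : ℕ} (hk : 0 < k) (d x y : ℂ) :
    ∏ a ∈ nthRootsFinset k (1:ℂ), ∏ b ∈ nthRootsFinset k (1:ℂ), (d + x * a - y * b)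
      = Gc k d x y := by
  have hζ := Complex.isPrimitiveRoot_exp k hk.ne'
  unfold Gc
  refine Finset.prod_congr rfl fun a _ => ?_
  rw [hζ.pow_sub_pow_eq_prod_sub_mul (d + x * a) y hk]
  exact Finset.prod_congr rfl fun b _ => by ring

lemma Phi_zero_abs {n k : ℕ} (hk : 0 < k) (w : Fin n → ℂ) :
    Complex.abs (Phi k w (fun _ => 0))
      = (∏ ij ∈ (Finset.univ : Finset (Fin n)).offDiag,
          Complex.abs (w ij.1 - w ij.2)) ^ (k * k) := by
  have hζ := Complex.isPrimitiveRoot_exp k hk.ne'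
  unfold Phi Gc
  rw [map_prod, ← Finset.prod_pow]
  refine Finset.prod_congr rfl fun ij _ => ?_
  have : ∀ η ∈ nthRootsFinset k (1:ℂ),
      ((w ij.1 - w ij.2 + 0 * η) ^ k - (0:ℂ) ^ k) = (w ij.1 - w ij.2) ^ k := by
    intro η _
    rw [zero_mul, add_zero, zero_pow hk.ne', sub_zero]
  rw [Finset.prod_congr rfl this, Finset.prod_const, hζ.card_nthRootsFinset,
    ← pow_mul, map_pow]

lemma prod_offDiag_subtype (s : Finset ℂ) (f : ℂ → ℂ → ℝ) :
    ∏ q ∈ (Finset.univ : Finset {x : ℂ // x ∈ s}).offDiag, f q.1.val q.2.val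
      = ∏ q ∈ s.offDiag, f q.1 q.2 := by
  classical
  apply Finset.prod_nbij (fun q => (q.1.val, q.2.val))
  · intro q hq
    simp only [Finset.mem_coe, Finset.mem_offDiag, Finset.mem_univ, true_and] at *
    exact ⟨q.1.2, q.2.2, fun h => hq (by ext1 <;> exact_mod_cast h)⟩
  · intro q _ q' _ h
    simp only [Prod.mk.injEq] at h
    exact Prod.ext (Subtype.ext h.1) (Subtype.ext h.2)
  · intro x hx
    simp only [Finset.mem_coe, Finset.mem_offDiag] at hx
    refine ⟨(⟨x.1, hx.1⟩, ⟨x.2, hx.2.1⟩), ?_, rfl⟩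
    simp only [Finset.mem_coe, Finset.mem_offDiag, Finset.mem_univ, true_and]
    exact fun h => hx.2.2 (congrArg Subtype.val h)
  · intro q _; rfl

lemma construction {n k : ℕ} (hk : 0 < k) (w : Fin n → ℂ) {r : ℝ} (hr : 0 < r) :
    ∃ z : Fin n × {η : ℂ // η ∈ nthRootsFinset k (1:ℂ)} → ℂ,
      (∀ P, Complex.abs (z P - w P.1) = r) ∧
      r ^ (n * (k * k - k)) *
        (∏ ij ∈ (Finset.univ : Finset (Fin n)).offDiag,
          Complex.abs (w ij.1 - w ij.2)) ^ (k * k)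
        ≤ ∏ q ∈ (Finset.univ : Finset (Fin n × {η : ℂ // η ∈ nthRootsFinset k (1:ℂ)})).offDiag,
            Complex.abs (z q.1 - z q.2) := by
  classical
  have hζ := Complex.isPrimitiveRoot_exp k hk.ne'
  obtain ⟨u, hu, hΦ⟩ := exists_phase (k := k) w hr
  set T := {η : ℂ // η ∈ nthRootsFinset k (1:ℂ)}
  refine ⟨fun P => w P.1 + u P.1 * (P.2 : ℂ), fun P => ?_, ?_⟩
  · rw [add_sub_cancel_left, map_mul, hu, abs_nthRoot hk P.2.2, mul_one]
  · beta_reduce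
    rw [prod_offDiag_prod_split (α := Fin n) (β := T) (g := fun P Q => Complex.abs
      ((w P.1 + u P.1 * (P.2 : ℂ)) - (w Q.1 + u Q.1 * (Q.2 : ℂ))))]
    have cardT : Fintype.card T = k := by
      rw [Fintype.card_coe, hζ.card_nthRootsFinset]
    -- Part A : within circles
    have hA : (r : ℝ) ^ (n * (k * k - k))
        ≤ ∏ i : Fin n, ∏ ab ∈ (Finset.univ : Finset T).offDiag,
            Complex.abs ((w i + u i * (ab.1 : ℂ)) - (w i + u i * (ab.2 : ℂ))) := by
      have hinner : ∀ i : Fin n, r ^ (k * k - k)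
          ≤ ∏ ab ∈ (Finset.univ : Finset T).offDiag,
              Complex.abs ((w i + u i * (ab.1 : ℂ)) - (w i + u i * (ab.2 : ℂ))) := by
        intro i
        have : ∀ ab ∈ (Finset.univ : Finset T).offDiag,
            Complex.abs ((w i + u i * (ab.1 : ℂ)) - (w i + u i * (ab.2 : ℂ)))
              = r * Complex.abs ((ab.1 : ℂ) - (ab.2 : ℂ)) := by
          intro ab _
          rw [add_sub_add_left_eq_sub, ← mul_sub, map_mul, hu]
        rw [Finset.prod_congr rfl this, Finset.prod_mul_distrib, Finset.prod_const,
          Finset.offDiag_card, Finset.card_univ, cardT]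
        have hv : (1:ℝ) ≤ ∏ ab ∈ (Finset.univ : Finset T).offDiag,
            Complex.abs ((ab.1 : ℂ) - (ab.2 : ℂ)) := by
          rw [prod_offDiag_subtype (nthRootsFinset k (1:ℂ)) (fun x y => Complex.abs (x - y))]
          exact vandermonde_ge_one hk
        have hpn : (0:ℝ) ≤ ∏ ab ∈ (Finset.univ : Finset T).offDiag,
            Complex.abs ((ab.1 : ℂ) - (ab.2 : ℂ)) :=
          Finset.prod_nonneg (fun ab _ => Complex.abs.nonneg _)
        nlinarith [pow_nonneg hr.le (k * k - k)]
      calc r ^ (n * (k * k - k)) = ∏ _i : Fin n, r ^ (k * k - k) := by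
            rw [Finset.prod_const, Finset.card_univ, Fintype.card_fin, ← pow_mul,
              Nat.mul_comm]
        _ ≤ _ := Finset.prod_le_prod (fun _ _ => pow_nonneg hr.le _) (fun i _ => hinner i)
    -- Part B : cross circles
    have hB : (∏ ij ∈ (Finset.univ : Finset (Fin n)).offDiag,
          Complex.abs (w ij.1 - w ij.2)) ^ (k * k)
        ≤ ∏ ij ∈ (Finset.univ : Finset (Fin n)).offDiag, ∏ a : T, ∏ b : T,
            Complex.abs ((w ij.1 + u ij.1 * (a : ℂ)) - (w ij.2 + u ij.2 * (b : ℂ))) := by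
      have : ∀ ij ∈ (Finset.univ : Finset (Fin n)).offDiag,
          ∏ a : T, ∏ b : T,
            Complex.abs ((w ij.1 + u ij.1 * (a : ℂ)) - (w ij.2 + u ij.2 * (b : ℂ)))
          = Complex.abs (Gc k (w ij.1 - w ij.2) (u ij.1) (u ij.2)) := by
        intro ij _
        calc ∏ a : T, ∏ b : T,
              Complex.abs ((w ij.1 + u ij.1 * (a : ℂ)) - (w ij.2 + u ij.2 * (b : ℂ)))
            = Complex.abs (∏ a ∈ nthRootsFinset k (1:ℂ), ∏ b ∈ nthRootsFinset k (1:ℂ),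
                ((w ij.1 - w ij.2) + u ij.1 * a - u ij.2 * b)) := by
              rw [map_prod, ← Finset.prod_coe_sort (nthRootsFinset k (1:ℂ))
                (fun a => Complex.abs (∏ b ∈ nthRootsFinset k (1:ℂ),
                  ((w ij.1 - w ij.2) + u ij.1 * a - u ij.2 * b)))]
              refine Finset.prod_congr rfl fun a _ => ?_
              rw [map_prod, ← Finset.prod_coe_sort (nthRootsFinset k (1:ℂ))
                (fun b => Complex.abs ((w ij.1 - w ij.2) + u ij.1 * (a : ℂ) - u ij.2 * b))]
              refine Finset.prod_congr rfl fun b _ => ?_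
              congr 1
              ring
          _ = Complex.abs (Gc k (w ij.1 - w ij.2) (u ij.1) (u ij.2)) := by
              rw [cross_prod_eq hk]
      rw [Finset.prod_congr rfl this]
      have hRHS : ∏ ij ∈ (Finset.univ : Finset (Fin n)).offDiag,
          Complex.abs (Gc k (w ij.1 - w ij.2) (u ij.1) (u ij.2))
          = Complex.abs (Phi k w u) := (map_prod Complex.abs _ _).symm
      rw [hRHS, ← Phi_zero_abs hk w]
      exact hΦ
    have hnn1 : (0:ℝ) ≤ (∏ ij ∈ (Finset.univ : Finset (Fin n)).offDiag,
        Complex.abs (w ij.1 - w ij.2)) ^ (k * k) :=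
      pow_nonneg (Finset.prod_nonneg fun _ _ => Complex.abs.nonneg _) _
    have hnn2 : (0:ℝ) ≤ ∏ i : Fin n, ∏ ab ∈ (Finset.univ : Finset T).offDiag,
        Complex.abs ((w i + u i * (ab.1 : ℂ)) - (w i + u i * (ab.2 : ℂ))) :=
      Finset.prod_nonneg fun _ _ => Finset.prod_nonneg fun _ _ => Complex.abs.nonneg _
    exact mul_le_mul hA hB hnn1 hnn2
lemma key_ineq {n k : ℕ} (hn : 2 ≤ n) (hk : 1 ≤ k) {r P : ℝ} (hr : 0 < r) (hP : 0 < P)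
    (hVr : r ≤ P ^ em n) :
    (r ^ ((1:ℝ)/(n:ℝ)) * (P ^ em n) ^ (((n:ℝ)-1)/(n:ℝ))) ^ 2
      ≤ ((r ^ (n*(k*k-k)) * P ^ (2*(k*k))) : ℝ) ^ em (n*k) := by
  have hnR : (2:ℝ) ≤ (n:ℝ) := by exact_mod_cast hn
  have hkR : (1:ℝ) ≤ (k:ℝ) := by exact_mod_cast hk
  have hn0 : (n:ℝ) ≠ 0 := by linarith
  have hn1 : (n:ℝ) - 1 ≠ 0 := by linarith
  have hnk1 : (0:ℝ) < (n:ℝ)*(k:ℝ) - 1 := by nlinarith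
  have hA : (0:ℝ) < r ^ (n*(k*k-k)) * P ^ (2*(k*k)) := by positivity
  have hBbase : (0:ℝ) < r ^ ((1:ℝ)/(n:ℝ)) * (P ^ em n) ^ (((n:ℝ)-1)/(n:ℝ)) := by
    have : (0:ℝ) < P ^ em n := Real.rpow_pos_of_pos hP _
    have := Real.rpow_pos_of_pos hr ((1:ℝ)/(n:ℝ))
    positivity
  rw [← Real.log_le_log_iff (by positivity) (Real.rpow_pos_of_pos hA _)]
  rw [Real.log_pow, Real.log_rpow hA,
    Real.log_mul (ne_of_gt (Real.rpow_pos_of_pos hr _))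
      (ne_of_gt (Real.rpow_pos_of_pos (Real.rpow_pos_of_pos hP _) _)),
    Real.log_rpow hr, Real.log_rpow (Real.rpow_pos_of_pos hP _), Real.log_rpow hP,
    Real.log_mul (ne_of_gt (by positivity : (0:ℝ) < r ^ (n*(k*k-k))))
      (ne_of_gt (by positivity : (0:ℝ) < P ^ (2*(k*k)))),
    Real.log_pow, Real.log_pow]
  set a := Real.log r with ha
  set c := Real.log P with hc
  have hlog : a ≤ em n * c := by
    have := Real.log_le_log hr hVr
    rwa [Real.log_rpow hP] at this
  have hcast1 : ((n*(k*k-k) : ℕ) : ℝ) = (n:ℝ)*((k:ℝ)*(k:ℝ)-(k:ℝ)) := by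
    have hkk : k ≤ k * k := by nlinarith
    push_cast [Nat.cast_sub hkk]
    ring
  have hcast2 : ((2*(k*k) : ℕ) : ℝ) = 2*((k:ℝ)*(k:ℝ)) := by push_cast; ring
  rw [hcast1, hcast2]
  have hemnk : em (n*k) = 2 / (((n:ℝ)*(k:ℝ)) * ((n:ℝ)*(k:ℝ) - 1)) := by
    unfold em; push_cast; ring_nf
  have hemn : em n = 2 / ((n:ℝ)*((n:ℝ)-1)) := rfl
  rw [hemnk, hemn]
  rw [hemn] at hlog
  have hdiff : 2 / (((n:ℝ)*(k:ℝ)) * ((n:ℝ)*(k:ℝ) - 1))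
        * ((n:ℝ)*((k:ℝ)*(k:ℝ)-(k:ℝ)) * a + 2*((k:ℝ)*(k:ℝ)) * c)
      - 2 * ((1:ℝ)/(n:ℝ) * a + ((n:ℝ)-1)/(n:ℝ) * (2 / ((n:ℝ)*((n:ℝ)-1)) * c))
      = (2*((n:ℝ)-1) / ((n:ℝ) * ((n:ℝ)*(k:ℝ)-1)))
        * (2 / ((n:ℝ)*((n:ℝ)-1)) * c - a) := by
    have hk0 : (k:ℝ) ≠ 0 := by linarith
    have hnk1' : (n:ℝ)*(k:ℝ) - 1 ≠ 0 := ne_of_gt hnk1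
    field_simp
    ring
  have hcoef : 0 ≤ (2*((n:ℝ)-1) / ((n:ℝ) * ((n:ℝ)*(k:ℝ)-1))) := by
    apply div_nonneg (by linarith) (by nlinarith)
  nlinarith [mul_nonneg hcoef (sub_nonneg.mpr hlog)]

lemma closedNbhd_bounded {K : Set ℂ} (hKb : Bornology.IsBounded K) (hKne : K.Nonempty)
    {ε : ℝ} (hε : 0 ≤ ε) : Bornology.IsBounded (closedNbhd K ε) := by
  obtain ⟨x0, hx0⟩ := hKne
  obtain ⟨R, hR⟩ := hKb.subset_closedBall x0
  apply (Metric.isBounded_closedBall (x := x0) (r := (ε + 1) + R)).subset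
  intro z hz
  have hz' : Metric.infDist z K < ε + 1 := lt_of_le_of_lt hz (by linarith)
  obtain ⟨x, hxK, hxd⟩ := (Metric.infDist_lt_iff ⟨x0, hx0⟩).mp hz'
  have hx0' : dist x x0 ≤ R := Metric.mem_closedBall.mp (hR hxK)
  have := dist_triangle z x x0
  simp only [Metric.mem_closedBall]
  linarith

lemma closedNbhd_nonempty {K : Set ℂ} (hKne : K.Nonempty) {ε : ℝ} (hε : 0 ≤ ε) :
    (closedNbhd K ε).Nonempty := by
  obtain ⟨x0, hx0⟩ := hKne
  exact ⟨x0, by simpa [closedNbhd] using le_trans (le_of_eq (Metric.infDist_zero_of_mem hx0)) hε⟩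

-- the n equally spaced collinear points in K^{1/n} give δ_n ≥ 2/(n(n-1))
lemma diam_lower {n : ℕ} (hn : 2 ≤ n) {K : Set ℂ} (hKne : K.Nonempty)
    (hKb : Bornology.IsBounded K) :
    2 / ((n:ℝ) * ((n:ℝ) - 1)) ≤ nthDiameter (closedNbhd K (1/(n:ℝ))) n := by
  obtain ⟨x0, hx0⟩ := hKne
  have hnR : (2:ℝ) ≤ (n:ℝ) := by exact_mod_cast hn
  set h : ℝ := 2 / ((n:ℝ) * ((n:ℝ) - 1)) with hh
  have hhpos : 0 < h := by
    apply div_pos (by norm_num)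
    nlinarith
  set w : Fin n → ℂ := fun a => x0 + ((((a:ℕ):ℝ) * h - 1/(n:ℝ) : ℝ) : ℂ) with hw
  have hne0 : (n:ℝ) ≠ 0 := by linarith
  have hne1 : (n:ℝ) - 1 ≠ 0 := by linarith
  have hmem : ∀ a, w a ∈ closedNbhd K (1/(n:ℝ)) := by
    intro a
    have hb1 : ((a:ℕ):ℝ) ≤ (n:ℝ) - 1 := by
      have h1 : (a:ℕ) ≤ n - 1 := Nat.le_sub_one_of_lt a.2
      have hn1' : 1 ≤ n := by omega
      have h2 := (Nat.cast_le (α := ℝ)).mpr h1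
      rwa [Nat.cast_sub hn1', Nat.cast_one] at h2
    have hb0 : (0:ℝ) ≤ ((a:ℕ):ℝ) := Nat.cast_nonneg _
    have hub : ((a:ℕ):ℝ) * h ≤ 2/(n:ℝ) := by
      calc ((a:ℕ):ℝ) * h ≤ ((n:ℝ)-1) * h := by nlinarith
        _ = 2/(n:ℝ) := by rw [hh]; field_simp
    have hdiv : 2/(n:ℝ) - 1/(n:ℝ) = 1/(n:ℝ) := by ring
    have habs : |((a:ℕ):ℝ) * h - 1/(n:ℝ)| ≤ 1/(n:ℝ) := by
      rw [abs_le]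
      constructor
      · have h3 : 0 ≤ ((a:ℕ):ℝ) * h := by positivity
        have h4 : 0 ≤ 1/(n:ℝ) := by positivity
        linarith
      · linarith
    show Metric.infDist (w a) K ≤ 1/(n:ℝ)
    have hsub : w a - x0 = ((((a:ℕ):ℝ) * h - 1/(n:ℝ) : ℝ) : ℂ) := by
      simp [hw]
    calc Metric.infDist (w a) K ≤ Metric.infDist x0 K + dist (w a) x0 :=
          Metric.infDist_le_infDist_add_dist
      _ = dist (w a) x0 := by rw [Metric.infDist_zero_of_mem hx0, zero_add]
      _ ≤ 1/(n:ℝ) := by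
          rw [Complex.dist_eq, hsub, Complex.norm_real, Real.norm_eq_abs]
          exact habs
  have hprod : h ≤ dval n w := by
    have hq : ∀ p ∈ pairs n, h ≤ Complex.abs (w p.1 - w p.2) := by
      intro p hp
      simp only [pairs, Finset.mem_filter, Finset.mem_univ, true_and] at hp
      have : w p.1 - w p.2 = (((((p.1:ℕ):ℝ) - ((p.2:ℕ):ℝ)) * h : ℝ) : ℂ) := by
        rw [hw]
        push_cast
        ring
      rw [this, Complex.abs_ofReal, abs_mul, abs_of_pos hhpos]
      have h1 : ((p.1:ℕ):ℝ) < ((p.2:ℕ):ℝ) := by exact_mod_cast hp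
      have hge1 : (1:ℝ) ≤ |((p.1:ℕ):ℝ) - ((p.2:ℕ):ℝ)| := by
        rw [abs_sub_comm, abs_of_pos (by linarith)]
        have : (p.1:ℕ) < (p.2:ℕ) := hp
        have : (p.1:ℕ) + 1 ≤ (p.2:ℕ) := this
        have : ((p.1:ℕ):ℝ) + 1 ≤ ((p.2:ℕ):ℝ) := by exact_mod_cast this
        linarith
      nlinarith
    have hpr : h ^ (pairs n).card ≤ praw w := by
      unfold praw
      calc h ^ (pairs n).card = ∏ _p ∈ pairs n, h := by rw [Finset.prod_const]
        _ ≤ _ := Finset.prod_le_prod (fun _ _ => hhpos.le) hq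
    have hcard : ((pairs n).card : ℝ) * em n = 1 := by
      rw [card_pairs_real]
      unfold em
      have hn1 : (n:ℝ) - 1 ≠ 0 := by linarith
      have hn0 : (n:ℝ) ≠ 0 := by linarith
      field_simp
    calc h = (h ^ (pairs n).card) ^ em n := by
          rw [← Real.rpow_natCast h (pairs n).card, ← Real.rpow_mul hhpos.le, hcard,
            Real.rpow_one]
      _ ≤ praw w ^ em n := Real.rpow_le_rpow (by positivity) hpr (em_nonneg n)
  have hbdd : Bornology.IsBounded (closedNbhd K (1/(n:ℝ))) :=
    closedNbhd_bounded hKb ⟨x0, hx0⟩ (by positivity)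
  exact le_trans hprod (dval_le_nthDiameter hbdd w hmem)

-- lower bound for δ_{n k}(L) from the construction
lemma delta_lower {n k : ℕ} (hn : 2 ≤ n) (hk : 0 < k) (w : Fin n → ℂ) {r : ℝ} (hr : 0 < r)
    {L : Set ℂ} (hLb : Bornology.IsBounded L) (hLne : L.Nonempty)
    (hL : ∀ (i : Fin n) (z : ℂ), Complex.abs (z - w i) = r → z ∈ L) :
    ((r ^ (n*(k*k-k)) * praw w ^ (2*(k*k))) : ℝ) ^ em (n*k)
      ≤ nthDiameter L (n*k) ^ 2 := by
  classical
  have habs_symm : ∀ (x y : ℂ), Complex.abs (x - y) = Complex.abs (y - x) := by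
    intro x y
    rw [← Complex.abs.map_neg, neg_sub]
  obtain ⟨z, hz1, hz2⟩ := construction hk w hr
  have hζ := Complex.isPrimitiveRoot_exp k hk.ne'
  have hcard : Fintype.card (Fin n × {η : ℂ // η ∈ nthRootsFinset k (1:ℂ)}) = n * k := by
    rw [Fintype.card_prod, Fintype.card_fin, Fintype.card_coe, hζ.card_nthRootsFinset]
  let e : (Fin n × {η : ℂ // η ∈ nthRootsFinset k (1:ℂ)}) ≃ Fin (n * k) :=
    Fintype.equivFinOfCardEq hcard
  let w' : Fin (n * k) → ℂ := z ∘ e.symm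
  have hsq : praw w' ^ 2 = ∏ q ∈ (Finset.univ :
      Finset (Fin n × {η : ℂ // η ∈ nthRootsFinset k (1:ℂ)})).offDiag,
      Complex.abs (z q.1 - z q.2) := by
    unfold praw pairs
    rw [← prod_offDiag_sq (fun a b => Complex.abs (w' a - w' b))
      (fun a b => habs_symm _ _)]
    rw [prod_offDiag_equiv e (fun a b => Complex.abs (w' a - w' b))]
    refine Finset.prod_congr rfl fun q _ => ?_
    show Complex.abs (z (e.symm (e q.1)) - z (e.symm (e q.2))) = _
    rw [e.symm_apply_apply, e.symm_apply_apply]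
  have hA : r ^ (n*(k*k-k)) * praw w ^ (2*(k*k)) ≤ praw w' ^ 2 := by
    rw [hsq]
    refine le_trans (le_of_eq ?_) hz2
    congr 1
    rw [prod_offDiag_sq (fun a b => Complex.abs (w a - w b)) (fun a b => habs_symm _ _)]
    unfold praw pairs
    rw [← pow_mul, Nat.mul_comm 2 (k*k), pow_mul]
  have hmem : ∀ j, w' j ∈ L := fun j => hL (e.symm j).1 _ (hz1 (e.symm j))
  have hdle : dval (n*k) w' ≤ nthDiameter L (n*k) := dval_le_nthDiameter hLb w' hmem
  have hd2 : dval (n*k) w' ^ 2 ≤ nthDiameter L (n*k) ^ 2 := by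
    apply pow_le_pow_left₀ (dval_nonneg _) hdle
  refine le_trans ?_ hd2
  unfold dval
  rw [← Real.rpow_natCast (praw w' ^ em (n*k)) 2, ← Real.rpow_mul (praw_nonneg _),
    mul_comm (em (n*k)), Real.rpow_mul (praw_nonneg _), Real.rpow_natCast]
  exact Real.rpow_le_rpow
    (mul_nonneg (pow_nonneg hr.le _) (pow_nonneg (praw_nonneg w) _)) hA (em_nonneg _)


end S9

open S9 in
/-- for `n ≥ 2`,
`(1/(n(n-1)))^{1/(n-1)} · δ_n(K^{1/n}) ≤ c(K^{1/(n-1)})^{n/(n-1)}`. -/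
theorem stmt9 (K : Set ℂ) (hK : IsCompact K) (hKne : K.Nonempty)
    (n : ℕ) (hn : 2 ≤ n) :
    ((1 : ℝ) / ((n : ℝ) * ((n : ℝ) - 1))) ^ ((1 : ℝ) / ((n : ℝ) - 1)) *
      nthDiameter (closedNbhd K ((1 : ℝ) / n)) n ≤
    capacity (closedNbhd K ((1 : ℝ) / ((n : ℝ) - 1))) ^ ((n : ℝ) / ((n : ℝ) - 1)) := by
  have hnR : (2:ℝ) ≤ (n:ℝ) := by exact_mod_cast hn
  have hne0 : (n:ℝ) ≠ 0 := by linarith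
  have hn1pos : (0:ℝ) < (n:ℝ) - 1 := by linarith
  have hne1 : (n:ℝ) - 1 ≠ 0 := ne_of_gt hn1pos
  set r : ℝ := (1 : ℝ) / ((n : ℝ) * ((n : ℝ) - 1)) with hrdef
  have hr : 0 < r := by
    rw [hrdef]; apply div_pos one_pos; nlinarith
  have hKb := hK.isBounded
  set Kn := closedNbhd K ((1 : ℝ) / n) with hKndef
  set L := closedNbhd K ((1 : ℝ) / ((n:ℝ) - 1)) with hLdef
  have hKnb : Bornology.IsBounded Kn := closedNbhd_bounded hKb hKne (by positivity)
  have hLb : Bornology.IsBounded L := closedNbhd_bounded hKb hKne (by positivity)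
  have hLne : L.Nonempty := closedNbhd_nonempty hKne (by positivity)
  set D := nthDiameter Kn n with hDdef
  have hD2r : 2*r ≤ D := by
    have h2 := diam_lower hn hKne hKb
    have h2r : 2 / ((n:ℝ)*((n:ℝ)-1)) = 2*r := by rw [hrdef]; ring
    rw [h2r] at h2
    exact h2
  set p : ℝ := (n:ℝ)/((n:ℝ)-1) with hpdef
  have hppos : 0 < p := by rw [hpdef]; positivity
  set r' : ℝ := r ^ ((1:ℝ)/((n:ℝ)-1)) with hr'def
  have hr'pos : 0 < r' := Real.rpow_pos_of_pos hr _
  show r' * D ≤ capacity L ^ p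
  apply le_of_forall_pos_le_add
  intro δ hδ
  set ε : ℝ := min (δ / r') r with hεdef
  have hεpos : 0 < ε := lt_min (div_pos hδ hr'pos) hr
  have hεr : ε ≤ r := min_le_right _ _
  -- pick a near-optimal configuration
  have hKnne : Kn.Nonempty := closedNbhd_nonempty hKne (by positivity)
  obtain ⟨pt, hpt⟩ := hKnne
  have hdsetne : (dset Kn n).Nonempty := ⟨dval n (fun _ => pt), fun _ => pt, fun _ => hpt, rfl⟩
  have hlt : D - ε < sSup (dset Kn n) := by
    rw [← nthDiameter_eq]
    linarith
  obtain ⟨x, hxmem, hxgt⟩ := exists_lt_of_lt_csSup hdsetne hlt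
  obtain ⟨w, hw, rfl⟩ := hxmem
  have hx' : D - ε < praw w ^ em n := hxgt
  have hVr : r ≤ praw w ^ em n := by linarith
  have hPpos : 0 < praw w := by
    rcases lt_or_eq_of_le (praw_nonneg w) with h | h
    · exact h
    · exfalso
      rw [← h, Real.zero_rpow (ne_of_gt (em_pos hn))] at hVr
      linarith
  set B : ℝ := r ^ ((1:ℝ)/(n:ℝ)) * (praw w ^ em n) ^ (((n:ℝ)-1)/(n:ℝ)) with hBdef
  have hBnn : 0 ≤ B := by
    rw [hBdef]
    have h1 := Real.rpow_nonneg hr.le ((1:ℝ)/(n:ℝ))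
    have h2 := Real.rpow_nonneg (Real.rpow_nonneg (praw_nonneg w) (em n)) (((n:ℝ)-1)/(n:ℝ))
    exact mul_nonneg h1 h2
  have hcap : B ≤ capacity L := by
    apply le_ciInf
    intro j
    set m := j + 2 with hmdef
    have hm2 : 2 ≤ m := by omega
    have hmk : 0 < m := by omega
    have hchain : nthDiameter L (n*m) ≤ nthDiameter L m :=
      nthDiameter_antitone hLb hLne hm2 (Nat.le_mul_of_pos_left m (by omega))
    have hcontain : ∀ (i : Fin n) (z : ℂ), Complex.abs (z - w i) = r → z ∈ L := by
      intro i z hz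
      have hwi : Metric.infDist (w i) K ≤ 1/(n:ℝ) := hw i
      show Metric.infDist z K ≤ 1/((n:ℝ)-1)
      have h1 : Metric.infDist z K ≤ Metric.infDist (w i) K + dist z (w i) :=
        Metric.infDist_le_infDist_add_dist
      have h2 : dist z (w i) = r := by rw [Complex.dist_eq, ← Complex.abs_apply, hz]
      have h3 : 1/(n:ℝ) + r = 1/((n:ℝ)-1) := by
        rw [hrdef]
        field_simp
        ring
      linarith
    have hdl := delta_lower hn hmk w hr hLb hLne hcontain
    have hki := key_ineq hn (by omega : 1 ≤ m) hr hPpos hVr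
    have hB2 : B ^ 2 ≤ nthDiameter L (n*m) ^ 2 := le_trans hki hdl
    have hB1 : B ≤ nthDiameter L (n*m) :=
      (pow_le_pow_iff_left₀ hBnn (nthDiameter_nonneg hLb hLne _) two_ne_zero).mp hB2
    exact le_trans hB1 hchain
  have hcappos : 0 ≤ capacity L := le_trans hBnn hcap
  have hraise : B ^ p ≤ capacity L ^ p := Real.rpow_le_rpow hBnn hcap hppos.le
  have hBp : B ^ p = r' * praw w ^ em n := by
    rw [hBdef, Real.mul_rpow (Real.rpow_nonneg hr.le _)
      (Real.rpow_nonneg (Real.rpow_nonneg (praw_nonneg w) _) _)]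
    congr 1
    · rw [hr'def, ← Real.rpow_mul hr.le]
      congr 1
      rw [hpdef]
      field_simp
    · rw [← Real.rpow_mul (Real.rpow_nonneg (praw_nonneg w) _)]
      have : (((n:ℝ)-1)/(n:ℝ)) * p = 1 := by
        rw [hpdef]; field_simp
      rw [this, Real.rpow_one]
  rw [hBp] at hraise
  have hfin : r' * (D - ε) ≤ capacity L ^ p := by
    have : r' * (D - ε) ≤ r' * (praw w ^ em n) := by nlinarith
    linarith
  have hεδ : r' * ε ≤ δ := by
    have h1 : ε ≤ δ / r' := min_le_left _ _
    calc r' * ε ≤ r' * (δ / r') := by nlinarith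
      _ = δ := by field_simp
  calc r' * D = r' * (D - ε) + r' * ε := by ring
    _ ≤ capacity L ^ p + δ := add_le_add hfin hεδ
end

section
/- Fix κ > 1, a positive integer ν, and an increasing sequence (N_p)_p of positive integers. Then there exists a family (E_p)_{p∈ℕ} of pairwise disjoint infinite subsets of ℕ, each consisting of multiples of ν, such that: (1) each E_p has positive natural lower density; (2) for any p ≠ q and any n ∈ E_p, m ∈ E_q with n > m, one has n > κ·m; (3) for each p, min E_p ≥ N_p. -/
/-- Natural lower density of a set of natural numbers. -/
noncomputable def lowerDensity (E : Set ℕ) : ℝ :=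
  Filter.liminf (fun n : ℕ =>
    (∑ k ∈ Finset.range (n + 1), E.indicator (fun _ => (1 : ℝ)) k) / n) Filter.atTop

lemma aux_pow2 (p q k l : ℕ) (h : 2 ^ p * (2 * k + 1) = 2 ^ q * (2 * l + 1)) : p = q := by
  induction p generalizing q k l with
  | zero =>
    cases q with
    | zero => rfl
    | succ q =>
      exfalso
      have h2 : 2 ∣ 2 ^ (q + 1) * (2 * l + 1) :=
        Dvd.dvd.mul_right (dvd_pow_self 2 (Nat.succ_ne_zero q)) _
      rw [pow_zero, one_mul] at h
      rw [← h] at h2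
      omega
  | succ p ih =>
    cases q with
    | zero =>
      exfalso
      have h2 : 2 ∣ 2 ^ (p + 1) * (2 * k + 1) :=
        Dvd.dvd.mul_right (dvd_pow_self 2 (Nat.succ_ne_zero p)) _
      rw [pow_zero, one_mul] at h
      rw [h] at h2
      omega
    | succ q =>
      have h2 : 2 * (2 ^ p * (2 * k + 1)) = 2 * (2 ^ q * (2 * l + 1)) := by
        calc 2 * (2 ^ p * (2 * k + 1)) = 2 ^ (p + 1) * (2 * k + 1) := by ring
          _ = 2 ^ (q + 1) * (2 * l + 1) := h
          _ = 2 * (2 ^ q * (2 * l + 1)) := by ring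
      have := ih q k l (Nat.eq_of_mul_eq_mul_left two_pos h2)
      omega

/-- Lemma 3.5: there is a family of pairwise disjoint infinite sets of
multiples of `ν`, each with positive lower density, growing apart by a factor `κ`,
and with prescribed minima. -/
theorem stmt10 (κ : ℝ) (hκ : 1 < κ) (ν : ℕ) (hν : 0 < ν)
    (N : ℕ → ℕ) (hN : StrictMono N) (hNpos : ∀ p, 0 < N p) :
    ∃ E : ℕ → Set ℕ,
      (∀ p, (E p).Infinite) ∧
      (∀ p, ∀ n ∈ E p, ν ∣ n) ∧
      (∀ p q, p ≠ q → Disjoint (E p) (E q)) ∧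
      (∀ p, 0 < lowerDensity (E p)) ∧
      (∀ p q, p ≠ q → ∀ n ∈ E p, ∀ m ∈ E q, m < n → κ * (m : ℝ) < (n : ℝ)) ∧
      (∀ p, ∀ n ∈ E p, N p ≤ n) := by
  obtain ⟨K, hK3, hKκ⟩ : ∃ K : ℕ, 3 ≤ K ∧ 2 * κ < (K : ℝ) := by
    refine ⟨⌈2 * κ⌉₊ + 3, by omega, ?_⟩
    have h1 := Nat.le_ceil (2 * κ)
    push_cast
    linarith
  have hK1 : 1 < K := by omega
  -- block data
  set T : ℕ → ℕ := fun j => K ^ (2 * j) with hTdef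
  set jf : ℕ → ℕ → ℕ := fun p k => 2 ^ p * (2 * k + 1) - 1 with hjfdef
  have hTpos : ∀ j, 0 < T j := fun j => Nat.pow_pos (by omega)
  have hTmono : Monotone T := fun a b h =>
    Nat.pow_le_pow_right (by omega) (by omega)
  have hTstep : ∀ j, K ^ 2 * T j = T (j + 1) := by
    intro j
    show K ^ 2 * K ^ (2 * j) = K ^ (2 * (j + 1))
    rw [← pow_add]
    ring_nf
  have hTgap : ∀ j, 2 * T j < T (j + 1) := by
    intro j
    rw [← hTstep j]
    have h9 : 9 ≤ K ^ 2 := by nlinarith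
    have := hTpos j
    nlinarith
  have hjf1 : ∀ p k, jf p k + 1 = 2 ^ p * (2 * k + 1) := by
    intro p k
    have : 0 < 2 ^ p * (2 * k + 1) := by positivity
    show 2 ^ p * (2 * k + 1) - 1 + 1 = _
    omega
  have hjf_ge : ∀ p k, 2 * k ≤ jf p k := by
    intro p k
    have h1 := hjf1 p k
    have h2 : 2 * k + 1 ≤ 2 ^ p * (2 * k + 1) := Nat.le_mul_of_pos_left _ (by positivity)
    omega
  have hjf_succ : ∀ p k, jf p (k + 1) = jf p k + 2 ^ (p + 1) := by
    intro p k
    have h1 := hjf1 p k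
    have h2 := hjf1 p (k + 1)
    have h3 : 2 ^ p * (2 * (k + 1) + 1) = 2 ^ p * (2 * k + 1) + 2 ^ (p + 1) := by
      rw [pow_succ]
      ring
    omega
  have hjf_inj : ∀ p q k l, jf p k = jf q l → p = q := by
    intro p q k l h
    have h1 := hjf1 p k
    have h2 := hjf1 q l
    exact aux_pow2 p q k l (by omega)
  have hjf_mono : ∀ p, StrictMono (jf p) := by
    intro p
    apply strictMono_nat_of_lt_succ
    intro k
    rw [hjf_succ]
    have : 0 < 2 ^ (p + 1) := by positivity
    omega
  have hk1T : ∀ p k, k + 1 ≤ T (jf p k) := by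
    intro p k
    have h1 : 2 * jf p k < K ^ (2 * jf p k) := Nat.lt_pow_self hK1
    have h2 := hjf_ge p k
    show k + 1 ≤ K ^ (2 * jf p k)
    omega
  -- the sets
  set E : ℕ → Set ℕ := fun p =>
    {n | ∃ k, N p ≤ k ∧ ∃ t, n = ν * t ∧ T (jf p k) ≤ t ∧ t ≤ 2 * T (jf p k)} with hEdef
  have hmemE : ∀ p k t, N p ≤ k → T (jf p k) ≤ t → t ≤ 2 * T (jf p k) → ν * t ∈ E p := by
    intro p k t h1 h2 h3
    exact ⟨k, h1, t, rfl, h2, h3⟩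
  -- block uniqueness
  have hblock : ∀ j j' t, T j ≤ t → t ≤ 2 * T j → T j' ≤ t → t ≤ 2 * T j' → j = j' := by
    intro j j' t h1 h2 h3 h4
    by_contra hne
    rcases Nat.lt_or_ge j j' with h | h
    · have : T (j + 1) ≤ T j' := hTmono h
      have := hTgap j
      omega
    · have hj' : j' < j := by omega
      have : T (j' + 1) ≤ T j := hTmono hj'
      have := hTgap j'
      omega
  refine ⟨E, ?_, ?_, ?_, ?_, ?_, ?_⟩
  · -- infinite
    intro p
    apply Set.infinite_of_injective_forall_mem
      (f := fun k : ℕ => ν * T (jf p (k + N p)))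
    · have hsm : StrictMono fun k : ℕ => ν * T (jf p (k + N p)) := by
        intro a b hab
        have h1 : jf p (a + N p) < jf p (b + N p) := hjf_mono p (by omega)
        have h2 : T (jf p (a + N p) + 1) ≤ T (jf p (b + N p)) := hTmono h1
        have h3 := hTgap (jf p (a + N p))
        have h4 := hTpos (jf p (a + N p))
        have h5 : T (jf p (a + N p)) < T (jf p (b + N p)) := by omega
        exact mul_lt_mul_of_pos_left h5 hν
      exact hsm.injective
    · intro k
      exact hmemE p (k + N p) _ (by omega) le_rfl (by omega)
  · -- multiples of ν
    rintro p n ⟨k, -, t, rfl, -, -⟩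
    exact dvd_mul_right ν t
  · -- disjoint
    intro p q hpq
    rw [Set.disjoint_left]
    rintro n ⟨k, -, t, rfl, h1, h2⟩ ⟨l, -, t', heq, h3, h4⟩
    have ht : t = t' := Nat.eq_of_mul_eq_mul_left hν heq
    subst ht
    exact hpq (hjf_inj p q k l (hblock _ _ t h1 h2 h3 h4))
  · -- positive lower density
    intro p
    set G : ℕ := K ^ (2 ^ (p + 2)) with hGdef
    have hGpos : 0 < G := Nat.pow_pos (by omega)
    set δ : ℝ := 1 / (2 * ν * G) with hδdef
    have hδpos : 0 < δ := by
      apply one_div_pos.2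
      have : (0:ℝ) < ν := by exact_mod_cast hν
      have : (0:ℝ) < G := by exact_mod_cast hGpos
      positivity
    have hTG : ∀ k, T (jf p (k + 1)) = T (jf p k) * G := by
      intro k
      rw [hjf_succ]
      show K ^ (2 * (jf p k + 2 ^ (p + 1))) = K ^ (2 * jf p k) * K ^ (2 ^ (p + 2))
      rw [← pow_add]
      congr 1
      rw [pow_succ 2 (p + 1)]
      ring
    set n₀ : ℕ := 2 * ν * T (jf p (N p)) with hn₀def
    have key : ∀ n : ℕ, n₀ ≤ n →
        δ ≤ (∑ k ∈ Finset.range (n + 1), (E p).indicator (fun _ => (1 : ℝ)) k) / n := by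
      intro n hn
      have hNn : N p ≤ n := by
        have h1 := hk1T p (N p)
        have h2 : T (jf p (N p)) ≤ n₀ := by
          have := hTpos (jf p (N p))
          calc T (jf p (N p)) ≤ 2 * ν * T (jf p (N p)) := Nat.le_mul_of_pos_left _ (by omega)
            _ = n₀ := rfl
        omega
      set P : ℕ → Prop := fun k => 2 * ν * T (jf p k) ≤ n with hPdef
      have hPN : P (N p) := hn
      set k := Nat.findGreatest P n with hkdef
      have hk : P k := Nat.findGreatest_spec hNn hPN
      have hkN : N p ≤ k := Nat.le_findGreatest hNn hPN
      have hnot : ¬ P (k + 1) := by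
        intro hP
        have h1 : k + 1 ≤ n := by
          have h2 := hk1T p (k + 1)
          have h3 : T (jf p (k + 1)) ≤ 2 * ν * T (jf p (k + 1)) :=
            Nat.le_mul_of_pos_left _ (by omega)
          omega
        have := Nat.le_findGreatest h1 hP
        omega
      have hn2 : n < 2 * ν * (T (jf p k) * G) := by
        simp only [hPdef, not_le] at hnot
        rw [hTG k] at hnot
        exact hnot
      set A : ℕ := T (jf p k) with hAdef
      have hApos : 0 < A := hTpos _
      -- counting
      set B : Finset ℕ := (Finset.Icc A (2 * A)).image (fun t => ν * t) with hBdef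
      have hBsub : B ⊆ Finset.range (n + 1) := by
        intro x hx
        rw [hBdef, Finset.mem_image] at hx
        obtain ⟨t, ht, rfl⟩ := hx
        rw [Finset.mem_Icc] at ht
        rw [Finset.mem_range]
        have h1 : ν * t ≤ ν * (2 * A) := Nat.mul_le_mul_left _ ht.2
        have h2 : ν * (2 * A) = 2 * ν * A := by ring
        have hk' : 2 * ν * A ≤ n := hk
        omega
      have hBmem : ∀ x ∈ B, x ∈ E p := by
        intro x hx
        rw [hBdef, Finset.mem_image] at hx
        obtain ⟨t, ht, rfl⟩ := hx
        rw [Finset.mem_Icc] at ht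
        exact hmemE p k t hkN ht.1 ht.2
      have hcard : B.card = A + 1 := by
        rw [hBdef, Finset.card_image_of_injective _ (fun a b h => Nat.eq_of_mul_eq_mul_left hν h),
          Nat.card_Icc]
        omega
      have hsum : (A : ℝ) + 1 ≤ ∑ j ∈ Finset.range (n + 1), (E p).indicator (fun _ => (1 : ℝ)) j := by
        have h1 : ∑ j ∈ B, (E p).indicator (fun _ => (1 : ℝ)) j = (A : ℝ) + 1 := by
          rw [Finset.sum_congr rfl (fun x hx => Set.indicator_of_mem (hBmem x hx) _),
            Finset.sum_const, hcard]
          push_cast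
          ring_nf
        rw [← h1]
        apply Finset.sum_le_sum_of_subset_of_nonneg hBsub
        intro i _ _
        exact Set.indicator_nonneg (fun _ _ => zero_le_one) i
      have hnposR : (0:ℝ) < n := by
        have : 0 < n := by
          have := hTpos (jf p (N p))
          have : 0 < n₀ := by positivity
          omega
        exact_mod_cast this
      rw [le_div_iff₀ hnposR]
      have h2 : (n : ℝ) ≤ 2 * ν * (A * G) := by exact_mod_cast hn2.le
      have h3 : δ * (2 * ν * (A * G)) = A := by
        rw [hδdef]
        have hν' : (ν : ℝ) ≠ 0 := by positivity
        have hG' : (G : ℝ) ≠ 0 := by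
          have : (0:ℝ) < G := by exact_mod_cast hGpos
          positivity
        field_simp
      calc δ * n ≤ δ * (2 * ν * (A * G)) := by
            apply mul_le_mul_of_nonneg_left h2 hδpos.le
        _ = A := h3
        _ ≤ (A : ℝ) + 1 := by linarith
        _ ≤ _ := hsum
    have hub : ∀ n : ℕ,
        (∑ k ∈ Finset.range (n + 1), (E p).indicator (fun _ => (1 : ℝ)) k) / n ≤ 2 := by
      intro n
      rcases Nat.eq_zero_or_pos n with rfl | hn
      · simp
      · have hcount : (∑ k ∈ Finset.range (n + 1), (E p).indicator (fun _ => (1 : ℝ)) k)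
            ≤ (n : ℝ) + 1 := by
          calc (∑ k ∈ Finset.range (n + 1), (E p).indicator (fun _ => (1 : ℝ)) k)
              ≤ ∑ _k ∈ Finset.range (n + 1), (1:ℝ) := by
                apply Finset.sum_le_sum
                intro i _
                exact Set.indicator_le_self' (fun _ _ => zero_le_one) i
            _ = (n : ℝ) + 1 := by simp
        have hnR : (1:ℝ) ≤ n := by exact_mod_cast hn
        rw [div_le_iff₀ (by linarith)]
        linarith
    have hev : ∀ᶠ n in Filter.atTop,
        δ ≤ (∑ k ∈ Finset.range (n + 1), (E p).indicator (fun _ => (1 : ℝ)) k) / n :=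
      Filter.eventually_atTop.2 ⟨n₀, key⟩
    have hco : Filter.IsCoboundedUnder (· ≥ ·) Filter.atTop
        (fun n : ℕ => (∑ k ∈ Finset.range (n + 1), (E p).indicator (fun _ => (1 : ℝ)) k) / n) :=
      Filter.isCoboundedUnder_ge_of_le _ hub
    have := Filter.le_liminf_of_le hco hev
    unfold lowerDensity
    exact lt_of_lt_of_le hδpos this
  · -- κ separation
    rintro p q hpq n ⟨k, -, t, rfl, ht1, ht2⟩ m ⟨l, -, t', rfl, ht3, ht4⟩ hlt
    have hjne : jf q l < jf p k := by
      have hne : jf p k ≠ jf q l := fun h => hpq (hjf_inj p q k l h)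
      rcases Nat.lt_or_ge (jf p k) (jf q l) with h | h
      · exfalso
        have h1 : T (jf p k + 1) ≤ T (jf q l) := hTmono h
        have h2 := hTgap (jf p k)
        have h4 : t < t' := by omega
        have h5 : ν * t < ν * t' := mul_lt_mul_of_pos_left h4 hν
        omega
      · omega
    -- now κ * (ν t') < ν t
    have h1 : T (jf q l + 1) ≤ T (jf p k) := hTmono hjne
    have h2 : K ^ 2 * T (jf q l) ≤ T (jf p k) := by rw [hTstep]; exact h1
    have hb : ν * (K ^ 2 * T (jf q l)) ≤ ν * t := by
      calc ν * (K ^ 2 * T (jf q l)) ≤ ν * T (jf p k) := Nat.mul_le_mul_left _ h2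
        _ ≤ ν * t := Nat.mul_le_mul_left _ ht1
    have ha : ν * t' ≤ ν * (2 * T (jf q l)) := Nat.mul_le_mul_left _ ht4
    have hbR : (ν : ℝ) * (K ^ 2 * T (jf q l)) ≤ (ν * t : ℕ) := by exact_mod_cast hb
    have haR : ((ν * t' : ℕ) : ℝ) ≤ ν * (2 * T (jf q l)) := by exact_mod_cast ha
    have hνR : (0:ℝ) < ν := by exact_mod_cast hν
    have hTR : (0:ℝ) < T (jf q l) := by exact_mod_cast hTpos (jf q l)
    have hKR : (3:ℝ) ≤ K := by exact_mod_cast hK3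
    push_cast at hbR haR ⊢
    have hx : (0:ℝ) < (ν : ℝ) * (T (jf q l) : ℝ) := mul_pos hνR hTR
    have hκ0 : (0:ℝ) ≤ κ := by linarith
    have h5 : κ * ((ν:ℝ) * (t':ℝ)) ≤ κ * ((ν:ℝ) * (2 * (T (jf q l) : ℝ))) :=
      mul_le_mul_of_nonneg_left haR hκ0
    have h6 : κ * ((ν:ℝ) * (2 * (T (jf q l) : ℝ))) = (2 * κ) * ((ν:ℝ) * (T (jf q l) : ℝ)) := by
      ring
    have h7 : (2 * κ) * ((ν:ℝ) * (T (jf q l) : ℝ)) < (K:ℝ) * ((ν:ℝ) * (T (jf q l) : ℝ)) :=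
      mul_lt_mul_of_pos_right hKκ hx
    have hKK : (K:ℝ) ≤ (K:ℝ) ^ 2 := by nlinarith
    have h8 : (K:ℝ) * ((ν:ℝ) * (T (jf q l) : ℝ)) ≤ (K:ℝ) ^ 2 * ((ν:ℝ) * (T (jf q l) : ℝ)) :=
      mul_le_mul_of_nonneg_right hKK hx.le
    have h9 : (K:ℝ) ^ 2 * ((ν:ℝ) * (T (jf q l) : ℝ)) = (ν:ℝ) * ((K:ℝ) ^ 2 * (T (jf q l) : ℝ)) := by
      ring
    linarith
  · -- min
    rintro p n ⟨k, hk, t, rfl, ht1, -⟩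
    have h1 : N p ≤ T (jf p k) := by
      have := hk1T p k
      omega
    calc N p ≤ T (jf p k) := h1
      _ ≤ ν * t := by
        calc T (jf p k) ≤ t := ht1
          _ ≤ ν * t := Nat.le_mul_of_pos_left _ hν
end

section
/- Fix a family (N_p(i))_{p∈ℕ}, indexed by i ∈ ℕ, of increasing sequences of positive integers. Then there exists a family (E_p(i))_{p∈ℕ, i∈ℕ} of pairwise disjoint subsets of ℕ such that: (1) for all p, i ∈ ℕ, the set E_p(i) has positive logarithmic lower density; (2) for all (p,i) ≠ (q,j) and all n ∈ E_p(i), m ∈ E_q(j) with n > m, one has n > m²; (3) for all p, i ∈ ℕ, min E_p(i) ≥ N_p(i). -/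
/-- Logarithmic lower density of a set of natural numbers. -/
noncomputable def logLowerDensity (E : Set ℕ) : ℝ :=
  Filter.liminf (fun n : ℕ =>
    (∑ k ∈ Finset.Icc 1 n, E.indicator (fun k => (1 : ℝ) / k) k) /
      (∑ k ∈ Finset.Icc 1 n, (1 : ℝ) / k)) Filter.atTop

namespace Stmt11Aux

open Filter Finset

/-- The scale sequence `M k = 2 ^ (4 ^ k)`. -/
def M (k : ℕ) : ℕ := 2 ^ 4 ^ k

lemma two_le_M (k : ℕ) : 2 ≤ M k := by
  have h1 : 1 ≤ 4 ^ k := Nat.one_le_pow _ _ (by norm_num)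
  calc 2 = 2 ^ 1 := rfl
    _ ≤ 2 ^ 4 ^ k := Nat.pow_le_pow_right (by norm_num) h1

lemma one_le_M (k : ℕ) : 1 ≤ M k := le_trans (by norm_num) (two_le_M k)

lemma M_mono {k l : ℕ} (h : k ≤ l) : M k ≤ M l :=
  Nat.pow_le_pow_right (by norm_num) (Nat.pow_le_pow_right (by norm_num) h)

lemma M_pow4 (k : ℕ) : M k ^ 4 = M (k + 1) := by
  unfold M
  rw [← pow_mul, pow_succ]

lemma M_sq_le_succ (k : ℕ) : M k ^ 2 ≤ M (k + 1) := by
  rw [← M_pow4 k]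
  exact Nat.pow_le_pow_right (one_le_M k) (by norm_num)

lemma lt_M (k : ℕ) : k < M k := by
  have h1 : k < 4 ^ k := Nat.lt_pow_self (by norm_num : 1 < 4)
  have h2 : 4 ^ k < 2 ^ 4 ^ k := Nat.lt_pow_self (by norm_num : 1 < 2)
  exact lt_trans h1 h2

/-- Uniqueness of the "ruler code". -/
lemma code_unique {k c d : ℕ} (h1 : (k + 1) % 2 ^ (c + 1) = 2 ^ c)
    (h2 : (k + 1) % 2 ^ (d + 1) = 2 ^ d) : c = d := by
  by_contra hne
  wlog hcd : c < d generalizing c d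
  · exact this h2 h1 (Ne.symm hne) (by omega)
  have hdvd : 2 ^ (c + 1) ∣ 2 ^ (d + 1) := pow_dvd_pow 2 (by omega)
  have hh : (k + 1) % 2 ^ (c + 1) = (k + 1) % 2 ^ (d + 1) % 2 ^ (c + 1) :=
    (Nat.mod_mod_of_dvd _ hdvd).symm
  rw [h2, h1] at hh
  have hdvd2 : 2 ^ (c + 1) ∣ 2 ^ d := pow_dvd_pow 2 (by omega)
  rw [Nat.mod_eq_zero_of_dvd hdvd2] at hh
  exact absurd hh (by positivity)

/-- The block set with code `c` and minimum threshold `N₀`. -/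
def blockSet (c N₀ : ℕ) : Set ℕ :=
  {n | ∃ k, (k + 1) % 2 ^ (c + 1) = 2 ^ c ∧ N₀ ≤ M k ∧ M k ≤ n ∧ n < M k ^ 2}

/-- Telescoping lower bound for harmonic block sums. -/
lemma log_sub_log_le_sum {a b : ℕ} (ha : 1 ≤ a) (hab : a ≤ b) :
    Real.log b - Real.log a ≤ ∑ j ∈ Finset.Ico a b, (1 : ℝ) / j := by
  induction b, hab using Nat.le_induction with
  | base => simp
  | succ b hb ih =>
    rw [Finset.sum_Ico_succ_top hb]
    have hb1 : (1 : ℝ) ≤ (b : ℝ) := by exact_mod_cast le_trans ha hb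
    have key : Real.log ((b : ℝ) + 1) - Real.log b ≤ 1 / b := by
      have h := Real.log_le_sub_one_of_pos (x := ((b : ℝ) + 1) / b) (by positivity)
      rw [Real.log_div (by positivity) (by positivity)] at h
      have he : ((b : ℝ) + 1) / b - 1 = 1 / b := by field_simp; ring
      linarith
    push_cast
    push_cast at ih
    linarith

/-- Upper bound for the harmonic sum. -/
lemma sum_le_one_add_log (n : ℕ) :
    ∑ j ∈ Finset.Icc 1 n, (1 : ℝ) / j ≤ 1 + Real.log n := by
  rcases Nat.eq_zero_or_pos n with h | h
  · subst h; simp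
  have key : ∀ m : ℕ, 1 ≤ m → ∑ j ∈ Finset.Ioc 1 m, (1 : ℝ) / j ≤ Real.log m := by
    intro m hm
    induction m, hm using Nat.le_induction with
    | base => simp
    | succ m hm ih =>
      rw [Finset.sum_Ioc_succ_top hm]
      have hb1 : (1 : ℝ) ≤ (m : ℝ) := by exact_mod_cast hm
      have key2 : (1 : ℝ) / ((m : ℝ) + 1) ≤ Real.log ((m : ℝ) + 1) - Real.log m := by
        have hx := Real.log_le_sub_one_of_pos (x := (m : ℝ) / ((m : ℝ) + 1)) (by positivity)
        rw [Real.log_div (by positivity) (by positivity)] at hx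
        have he : (m : ℝ) / ((m : ℝ) + 1) - 1 = -(1 / ((m : ℝ) + 1)) := by
          field_simp; ring
        linarith
      push_cast
      linarith
  rw [Finset.Icc_eq_cons_Ioc h, Finset.sum_cons]
  have h2 := key n h
  have h11 : (1 : ℝ) / ((1 : ℕ) : ℝ) = 1 := by norm_num
  rw [h11]
  linarith

lemma mem_blockSet {c N₀ k n : ℕ} (hk : (k + 1) % 2 ^ (c + 1) = 2 ^ c)
    (hN : N₀ ≤ M k) (h1 : M k ≤ n) (h2 : n < M k ^ 2) : n ∈ blockSet c N₀ :=
  ⟨k, hk, hN, h1, h2⟩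

/-- The key density estimate. -/
lemma density_pos (c N₀ : ℕ) : 0 < logLowerDensity (blockSet c N₀) := by
  classical
  set g : ℕ := 2 ^ (c + 1) with hg
  have hg2 : 2 ≤ g := by
    have : (2 : ℕ) ^ 1 ≤ 2 ^ (c + 1) := Nat.pow_le_pow_right (by norm_num) (by omega)
    simpa [hg] using this
  have hcg : 2 ^ c < g := by
    rw [hg]
    exact Nat.pow_lt_pow_right (by norm_num) (by omega)
  -- base index k₁
  set k₁ : ℕ := 2 ^ c - 1 + N₀ * g with hk₁
  have hk₁code : (k₁ + 1) % g = 2 ^ c := by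
    have h1 : 1 ≤ 2 ^ c := Nat.one_le_two_pow
    have : k₁ + 1 = 2 ^ c + N₀ * g := by omega
    rw [this, Nat.add_mul_mod_self_right]
    exact Nat.mod_eq_of_lt hcg
  have hk₁N : N₀ ≤ M k₁ := by
    have h1 : N₀ ≤ N₀ * g := Nat.le_mul_of_pos_right _ (by omega)
    have h2 : N₀ * g ≤ k₁ := by omega
    exact le_trans (le_trans h1 h2) (lt_M k₁).le
  -- step closure
  have hstep : ∀ k, (k + 1) % g = 2 ^ c → (k + g + 1) % g = 2 ^ c := by
    intro k hk
    have : k + g + 1 = k + 1 + g := by omega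
    rw [this, Nat.add_mod_right]
    exact hk
  set c₀ : ℝ := 1 / (3 * 4 ^ g) with hc₀
  have hc₀pos : 0 < c₀ := by positivity
  have hlog2 : (0.6931471803 : ℝ) < Real.log 2 := Real.log_two_gt_d9
  -- eventual lower bound
  have hev : ∀ n : ℕ, M (k₁ + g) ^ 2 ≤ n →
      c₀ ≤ (∑ k ∈ Finset.Icc 1 n, (blockSet c N₀).indicator (fun k => (1 : ℝ) / k) k) /
        (∑ k ∈ Finset.Icc 1 n, (1 : ℝ) / k) := by
    intro n hn
    set P : ℕ → Prop := fun k => (k + 1) % g = 2 ^ c ∧ N₀ ≤ M k ∧ M k ^ 2 ≤ n + 1 with hP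
    set K : ℕ := Nat.findGreatest P n with hKdef
    have hwit : P (k₁ + g) := by
      refine ⟨hstep _ hk₁code, le_trans hk₁N (M_mono (by omega)), by omega⟩
    have hwitle : k₁ + g ≤ n :=
      le_trans (le_trans (lt_M _).le (Nat.le_self_pow (by norm_num : (2:ℕ) ≠ 0) _)) hn
    have hK : P K := Nat.findGreatest_spec hwitle hwit
    have hKge : k₁ + g ≤ K := Nat.le_findGreatest hwitle hwit
    have hK2 : 2 ≤ K := le_trans (by omega) hKge
    -- upper bound on n
    have hnup : n < M (K + g) ^ 2 := by
      by_cases hcase : K + g ≤ n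
      · have hng : ¬ P (K + g) := Nat.findGreatest_is_greatest
          (show Nat.findGreatest P n < K + g by rw [← hKdef]; omega) hcase
        by_contra hcon
        push_neg at hcon
        exact hng ⟨hstep _ hK.1, le_trans hK.2.1 (M_mono (by omega)), by omega⟩
      · push_neg at hcase
        calc n < K + g := hcase
          _ ≤ M (K + g) := (lt_M _).le
          _ ≤ M (K + g) ^ 2 := Nat.le_self_pow (by norm_num : (2:ℕ) ≠ 0) _
    -- numerator lower bound
    have hMK1 : 1 ≤ M K := one_le_M K
    have hnum : (4 : ℝ) ^ K * Real.log 2 ≤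
        ∑ k ∈ Finset.Icc 1 n, (blockSet c N₀).indicator (fun k => (1 : ℝ) / k) k := by
      have hsub : Finset.Ico (M K) (M K ^ 2) ⊆ Finset.Icc 1 n := by
        intro j hj
        rw [Finset.mem_Ico] at hj
        rw [Finset.mem_Icc]
        constructor
        · omega
        · have := hK.2.2; omega
      have hstep1 : ∑ j ∈ Finset.Ico (M K) (M K ^ 2), (1 : ℝ) / j ≤
          ∑ k ∈ Finset.Icc 1 n, (blockSet c N₀).indicator (fun k => (1 : ℝ) / k) k := by
        have heq : ∑ j ∈ Finset.Ico (M K) (M K ^ 2), (1 : ℝ) / j =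
            ∑ j ∈ Finset.Ico (M K) (M K ^ 2),
              (blockSet c N₀).indicator (fun k => (1 : ℝ) / k) j := by
          refine Finset.sum_congr rfl fun j hj => ?_
          rw [Finset.mem_Ico] at hj
          rw [Set.indicator_of_mem (mem_blockSet hK.1 hK.2.1 hj.1 hj.2)]
        rw [heq]
        refine Finset.sum_le_sum_of_subset_of_nonneg hsub fun j _ _ => ?_
        exact Set.indicator_apply_nonneg fun _ => by positivity
      refine le_trans ?_ hstep1
      have hlb := log_sub_log_le_sum hMK1 (Nat.le_self_pow (by norm_num : (2:ℕ) ≠ 0) (M K))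
      have hcast : Real.log ((M K ^ 2 : ℕ) : ℝ) - Real.log ((M K : ℕ) : ℝ)
          = (4 : ℝ) ^ K * Real.log 2 := by
        push_cast
        rw [Real.log_pow]
        have : Real.log ((M K : ℕ) : ℝ) = (4 : ℝ) ^ K * Real.log 2 := by
          show Real.log ((2 ^ 4 ^ K : ℕ) : ℝ) = _
          push_cast
          rw [Real.log_pow]
          push_cast
          ring
        rw [this]; ring
      rw [hcast] at hlb
      exact hlb
    -- denominator upper bound
    have hden : ∑ k ∈ Finset.Icc 1 n, (1 : ℝ) / k ≤
        3 * 4 ^ g * ((4 : ℝ) ^ K * Real.log 2) := by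
      have h1 := sum_le_one_add_log n
      have hlogn : Real.log n ≤ 2 * (4 : ℝ) ^ g * ((4 : ℝ) ^ K * Real.log 2) := by
        have hn1 : (1 : ℝ) ≤ (n : ℝ) := by
          have : 1 ≤ n := le_trans (one_le_M _) (le_trans (Nat.le_self_pow (by norm_num : (2:ℕ) ≠ 0) _) hn)
          exact_mod_cast this
        have h2 : Real.log n ≤ Real.log ((M (K + g) ^ 2 : ℕ) : ℝ) := by
          apply Real.log_le_log (by linarith)
          exact_mod_cast hnup.le
        have h3 : Real.log ((M (K + g) ^ 2 : ℕ) : ℝ)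
            = 2 * ((4 : ℝ) ^ (K + g) * Real.log 2) := by
          show Real.log (((2 ^ 4 ^ (K + g)) ^ 2 : ℕ) : ℝ) = _
          push_cast
          rw [← pow_mul, Real.log_pow]
          push_cast
          ring
        rw [h3, pow_add] at h2
        calc Real.log n ≤ 2 * ((4 : ℝ) ^ K * (4 : ℝ) ^ g * Real.log 2) := h2
          _ = 2 * (4 : ℝ) ^ g * ((4 : ℝ) ^ K * Real.log 2) := by ring
      have hone : (1 : ℝ) ≤ (4 : ℝ) ^ K * Real.log 2 := by
        have h4K : (16 : ℝ) ≤ (4 : ℝ) ^ K := by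
          calc (16 : ℝ) = 4 ^ 2 := by norm_num
            _ ≤ 4 ^ K := by
              apply pow_le_pow_right₀ (by norm_num) hK2
        nlinarith
      have h4g1 : (1 : ℝ) ≤ (4 : ℝ) ^ g := one_le_pow₀ (by norm_num)
      have h5 : (1 : ℝ) ≤ (4 : ℝ) ^ g * ((4 : ℝ) ^ K * Real.log 2) := by nlinarith
      nlinarith
    -- combine
    have hdenpos : 0 < ∑ k ∈ Finset.Icc 1 n, (1 : ℝ) / k := by
      have h1n : 1 ∈ Finset.Icc 1 n := by
        rw [Finset.mem_Icc]
        refine ⟨le_refl 1, ?_⟩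
        exact le_trans (one_le_M _) (le_trans (Nat.le_self_pow (by norm_num : (2:ℕ) ≠ 0) _) hn)
      have := Finset.single_le_sum (f := fun k : ℕ => (1 : ℝ) / k)
        (fun i _ => by positivity) h1n
      simp only [Nat.cast_one, div_one] at this
      linarith
    rw [le_div_iff₀ hdenpos]
    calc c₀ * ∑ k ∈ Finset.Icc 1 n, (1 : ℝ) / k
        ≤ c₀ * (3 * 4 ^ g * ((4 : ℝ) ^ K * Real.log 2)) := by
          apply mul_le_mul_of_nonneg_left hden hc₀pos.le
      _ = (4 : ℝ) ^ K * Real.log 2 := by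
          rw [hc₀]
          field_simp
      _ ≤ _ := hnum
  -- conclude about the liminf
  have hevf : ∀ᶠ n in atTop, c₀ ≤
      (∑ k ∈ Finset.Icc 1 n, (blockSet c N₀).indicator (fun k => (1 : ℝ) / k) k) /
        (∑ k ∈ Finset.Icc 1 n, (1 : ℝ) / k) :=
    eventually_atTop.mpr ⟨M (k₁ + g) ^ 2, hev⟩
  have hub : ∀ n : ℕ,
      (∑ k ∈ Finset.Icc 1 n, (blockSet c N₀).indicator (fun k => (1 : ℝ) / k) k) /
        (∑ k ∈ Finset.Icc 1 n, (1 : ℝ) / k) ≤ 1 := by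
    intro n
    have hdnn : 0 ≤ ∑ k ∈ Finset.Icc 1 n, (1 : ℝ) / k :=
      Finset.sum_nonneg fun k _ => by positivity
    rcases eq_or_lt_of_le hdnn with hd0 | hd
    · rw [← hd0, div_zero]; norm_num
    · rw [div_le_one hd]
      refine Finset.sum_le_sum fun k _ => ?_
      exact Set.indicator_apply_le' (fun _ => le_refl _) (fun _ => by positivity)
  refine lt_of_lt_of_le hc₀pos ?_
  apply Filter.le_liminf_of_le
  · exact Filter.isCoboundedUnder_ge_of_le atTop hub
  · exact hevf

end Stmt11Aux

/-- Lemma 3.10: there is a doubly-indexed family of pairwise disjoint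
subsets of `ℕ`, each with positive logarithmic lower density, separated by squares,
and with prescribed minima.  Here `N i p` stands for `N_p(i)`. -/
theorem stmt11 (N : ℕ → ℕ → ℕ)
    (hNmono : ∀ i, StrictMono (N i)) (hNpos : ∀ i p, 0 < N i p) :
    ∃ E : ℕ → ℕ → Set ℕ,
      (∀ i p j q, (p, i) ≠ (q, j) → Disjoint (E i p) (E j q)) ∧
      (∀ i p, 0 < logLowerDensity (E i p)) ∧
      (∀ i p j q, (p, i) ≠ (q, j) →
        ∀ n ∈ E i p, ∀ m ∈ E j q, m < n → m ^ 2 < n) ∧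
      (∀ i p, ∀ n ∈ E i p, N i p ≤ n) := by
  classical
  open Stmt11Aux in
  refine ⟨fun i p => blockSet (Nat.pair i p) (N i p), ?_, ?_, ?_, ?_⟩
  · -- disjointness
    intro i p j q hne
    rw [Set.disjoint_left]
    rintro n ⟨k, hk, -, hk1, hk2⟩ ⟨l, hl, -, hl1, hl2⟩
    rcases lt_trichotomy k l with h | h | h
    · have : M k ^ 2 ≤ M l :=
        le_trans (M_sq_le_succ k) (M_mono (by omega))
      omega
    · subst h
      have := code_unique hk hl
      have := Nat.pair_eq_pair.mp this
      exact hne (by simp [this.1, this.2])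
    · have : M l ^ 2 ≤ M k :=
        le_trans (M_sq_le_succ l) (M_mono (by omega))
      omega
  · -- density
    intro i p
    exact density_pos _ _
  · -- square separation
    intro i p j q hne n hn m hm hmn
    obtain ⟨k, hk, -, hk1, hk2⟩ := hn
    obtain ⟨l, hl, -, hl1, hl2⟩ := hm
    rcases lt_trichotomy l k with h | h | h
    · have h1 : m ^ 2 < (M l ^ 2) ^ 2 := Nat.pow_lt_pow_left hl2 (by norm_num)
      have h2 : (M l ^ 2) ^ 2 = M l ^ 4 := by ring
      have h3 : M l ^ 4 ≤ M k := by
        rw [M_pow4]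
        exact M_mono (by omega)
      omega
    · subst h
      have := code_unique hk hl
      have := Nat.pair_eq_pair.mp this
      exact absurd (by simp [this.1, this.2] : (p, i) = (q, j)) hne
    · exfalso
      have : M k ^ 2 ≤ M l :=
        le_trans (M_sq_le_succ k) (M_mono (by omega))
      omega
  · -- minima
    rintro i p n ⟨k, -, hN, h1, -⟩
    exact le_trans hN h1
end
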